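/- arXiv:2309.06224 — 3 statements merged into one kernel-verified Lean document; each statement's English description precedes it below -/
import Mathlib

section
/- Suppose Σ_Γ has an irreducible core and let E ⊆ Σ_Γ be a nonempty clopen set. Let C_{α₁},…,C_{αₙ} and C_{β₁},…,C_{βₙ} be two collections of pairwise disjoint cones contained in E with t(α_i) = t(β_i) for each i, and suppose that neither of the unions ⋃_{i=1}^n C_{α_i} and ⋃_{i=1}^n C_{β_i} is equal to E. Then there exists f ∈ V_{Γ,E} that maps each C_{α_i} to C_{β_i} by the canonical similarity. -/
open scoped Classical

noncomputable section

/-- A finite directed graph (loops and parallel edges are allowed). -/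
structure FinDigraph : Type 1 where
  V : Type
  E : Type
  [fintypeV : Fintype V]
  [fintypeE : Fintype E]
  o : E → V
  t : E → V

attribute [instance] FinDigraph.fintypeV FinDigraph.fintypeE

instance (Γ : FinDigraph) : TopologicalSpace Γ.E := ⊥
instance (Γ : FinDigraph) : DiscreteTopology Γ.E := ⟨rfl⟩

namespace FinDigraph

variable (Γ : FinDigraph)

/-- The subshift of finite type `Σ_Γ`: the set of all infinite directed paths in `Γ`,
viewed as a subset of the product space of all edge sequences (each edge's terminus is
the origin of the next edge). -/
def shift : Set (ℕ → Γ.E) := {x | ∀ i, Γ.t (x i) = Γ.o (x (i + 1))}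

/-- Validity of a finite directed path starting at a given node. -/
def pathOk : Γ.V → List Γ.E → Prop
  | _, [] => True
  | v, e :: l => Γ.o e = v ∧ pathOk (Γ.t e) l

/-- A finite directed path in `Γ` (a node together with a compatible list of edges;
a path with no edges is a node, regarded as a path of length `0`). -/
structure FinPath where
  start : Γ.V
  edges : List Γ.E
  ok : Γ.pathOk start edges

/-- Terminus of a list of edges starting at a given node. -/
def pathEndAux : Γ.V → List Γ.E → Γ.V
  | v, [] => v
  | _, e :: l => pathEndAux (Γ.t e) l

/-- The terminus `t(α)` of a finite directed path. -/
def pathEnd (α : Γ.FinPath) : Γ.V := Γ.pathEndAux α.start α.edges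

/-- The length-0 path at a node `v`. -/
def trivPath (v : Γ.V) : Γ.FinPath := ⟨v, [], by simp [pathOk]⟩

/-- The cone `C_α ⊆ Σ_Γ` of all infinite directed paths having `α` as a prefix. -/
def cone (α : Γ.FinPath) : Set (ℕ → Γ.E) :=
  {x | x ∈ Γ.shift ∧ Γ.o (x 0) = α.start ∧
    ∀ (i : ℕ) (h : i < α.edges.length), x i = α.edges.get ⟨i, h⟩}

/-- The canonical similarity `C_α → C_β` (for `t(α) = t(β)`) on the level of edge
sequences: delete the prefix `α` and attach the prefix `β`. -/
def splice (α β : Γ.FinPath) (x : ℕ → Γ.E) : ℕ → Γ.E := fun i =>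
  if h : i < β.edges.length then β.edges.get ⟨i, h⟩
  else x (i - β.edges.length + α.edges.length)

/-- Concatenation `α · ω` of a finite path with an infinite path (on sequences). -/
def catPath (α : Γ.FinPath) (x : ℕ → Γ.E) : ℕ → Γ.E :=
  Γ.splice (Γ.trivPath (Γ.pathEnd α)) α x

/-- The length of the path `f̄(α)`, i.e. of the greatest common prefix of all points
of `f(C_α)`. -/
def barLen (f : (ℕ → Γ.E) → ℕ → Γ.E) (α : Γ.FinPath) : ℕ :=
  sSup {n | ∀ x ∈ Γ.cone α, ∀ y ∈ Γ.cone α, ∀ i < n, f x i = f y i}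

/-- The local action `f|_α : C_{t(α)} → C_{t(f̄(α))}`, determined by
`f(α·ω) = f̄(α)·(f|_α)(ω)`.  It is recorded together with the node `t(α)`
(the node of its domain cone), and is extended by the identity off the cone
`C_{t(α)}`. -/
def localAction (f : (ℕ → Γ.E) → ℕ → Γ.E) (α : Γ.FinPath) :
    Γ.V × ((ℕ → Γ.E) → ℕ → Γ.E) :=
  (Γ.pathEnd α, fun w =>
    if w ∈ Γ.cone (Γ.trivPath (Γ.pathEnd α)) then
      fun i => f (Γ.catPath α w) (i + Γ.barLen f α)
    else w)

/-- A map is rational (on a domain `D`) if it has only finitely many distinct local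
actions at cones contained in `D`. -/
def RationalOn (f : (ℕ → Γ.E) → ℕ → Γ.E) (D : Set (ℕ → Γ.E)) : Prop :=
  (Γ.localAction f '' {α : Γ.FinPath | Γ.cone α ⊆ D}).Finite

/-- The nucleus `𝒩_f` of a map: the set of local actions `f|_α` that occur for
infinitely many finite paths `α` with `C_α` contained in the domain. -/
def nucleusOf (f : (ℕ → Γ.E) → ℕ → Γ.E) (D : Set (ℕ → Γ.E)) :
    Set (Γ.V × ((ℕ → Γ.E) → ℕ → Γ.E)) :=
  {p | {α : Γ.FinPath | Γ.cone α ⊆ D ∧ Γ.localAction f α = p}.Infinite}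

/-- A nondegenerate map on `Σ_Γ` with domain `D`: it takes values in `Σ_Γ` and maps no
cone contained in `D` to a single point. -/
def Nondegenerate (f : (ℕ → Γ.E) → ℕ → Γ.E) (D : Set (ℕ → Γ.E)) : Prop :=
  (∀ x ∈ D, f x ∈ Γ.shift) ∧
  ∀ α : Γ.FinPath, Γ.cone α ⊆ D → ¬∃ p, ∀ x ∈ Γ.cone α, f x = p

/-- Extension of a map `E → E'` between subsets of the sequence space to a globally
defined map (by the identity off `E`). -/
def homExt (E E' : Set (ℕ → Γ.E)) (f : ↥E → ↥E') : (ℕ → Γ.E) → ℕ → Γ.E :=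
  fun x => if h : x ∈ E then ↑(f ⟨x, h⟩) else x

/-- Extension of a permutation of `E` to a globally defined map. -/
def permExt (E : Set (ℕ → Γ.E)) (g : Equiv.Perm ↥E) : (ℕ → Γ.E) → ℕ → Γ.E :=
  Γ.homExt E E ⇑g

/-- `E` is a clopen subset of the subshift `Σ_Γ`. -/
def ClopenIn (E : Set (ℕ → Γ.E)) : Prop :=
  IsClopen {x : ↥Γ.shift | (x : ℕ → Γ.E) ∈ E}

/-- `U ⊆ Σ_Γ` is open in the subshift. -/
def OpenInShift (U : Set (ℕ → Γ.E)) : Prop :=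
  IsOpen {x : ↥Γ.shift | (x : ℕ → Γ.E) ∈ U}

/-- The subshift `Σ_Γ` has no isolated points. -/
def NoIsolatedPoints : Prop := ∀ x : ↥Γ.shift, ¬IsOpen ({x} : Set ↥Γ.shift)

/-- The subshift `Σ_Γ` has no empty cones. -/
def NoEmptyCones : Prop := ∀ α : Γ.FinPath, (Γ.cone α).Nonempty

/-- A permutation of `E` which is a homeomorphism and is a rational map:
an element of the rational group `R_{Γ,E}`. -/
def IsRatHomeo (E : Set (ℕ → Γ.E)) (g : Equiv.Perm ↥E) : Prop :=
  Continuous ⇑g ∧ Continuous ⇑g.symm ∧ Γ.RationalOn (Γ.permExt E g) E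

/-- `g` maps the cone `C_α` to the cone `C_β` by the canonical similarity
`α·ω ↦ β·ω`. -/
def RealizesCanonSim (E : Set (ℕ → Γ.E)) (g : Equiv.Perm ↥E) (α β : Γ.FinPath) : Prop :=
  ∀ x, ∀ hx : x ∈ E, x ∈ Γ.cone α → ↑(g ⟨x, hx⟩) = Γ.splice α β x

/-- A rational similarity group (RSG): a subgroup of the rational group `R_{Γ,E}` that
realizes the canonical similarity between any two cones `C_α, C_β ⊊ E` with
`t(α) = t(β)`. -/
def IsRSG (E : Set (ℕ → Γ.E)) (G : Subgroup (Equiv.Perm ↥E)) : Prop :=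
  (∀ g ∈ G, Γ.IsRatHomeo E g) ∧
  ∀ α β : Γ.FinPath, Γ.pathEnd α = Γ.pathEnd β → Γ.cone α ⊂ E → Γ.cone β ⊂ E →
    ∃ g ∈ G, Γ.RealizesCanonSim E g α β

/-- `h` locally agrees with the group `G`: every point has an open neighborhood on
which `h` coincides with some element of `G`. -/
def LocallyAgrees (E : Set (ℕ → Γ.E)) (G : Subgroup (Equiv.Perm ↥E))
    (h : Equiv.Perm ↥E) : Prop :=
  ∀ x : ↥E, ∃ U : Set ↥E, IsOpen U ∧ x ∈ U ∧ ∃ g ∈ G, ∀ u ∈ U, h u = g u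

/-- `G` is full as a group of homeomorphisms of `E`: every homeomorphism of `E` that
locally agrees with `G` already belongs to `G`. -/
def IsFullOn (E : Set (ℕ → Γ.E)) (G : Subgroup (Equiv.Perm ↥E)) : Prop :=
  ∀ h : Equiv.Perm ↥E, Continuous ⇑h → Continuous ⇑h.symm →
    Γ.LocallyAgrees E G h → h ∈ G

/-- The nucleus `𝒩_G` of a subgroup `G ≤ R_{Γ,E}`: the union of the nuclei of its
elements. -/
def groupNucleus (E : Set (ℕ → Γ.E)) (G : Subgroup (Equiv.Perm ↥E)) :
    Set (Γ.V × ((ℕ → Γ.E) → ℕ → Γ.E)) :=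
  ⋃ g ∈ G, Γ.nucleusOf (Γ.permExt E g) E

/-- An edge of the induced subgraph on a set `W` of nodes. -/
def InducedEdge (W : Set Γ.V) (e : Γ.E) : Prop := Γ.o e ∈ W ∧ Γ.t e ∈ W

/-- A path of the induced subgraph on `W`. -/
def PathIn (W : Set Γ.V) (α : Γ.FinPath) : Prop :=
  α.start ∈ W ∧ ∀ e ∈ α.edges, Γ.InducedEdge W e

/-- The induced subgraph on `W` is strongly connected and is not a directed cycle,
i.e. `Σ_{Γ₀}` is irreducible (where `Γ₀` is the induced subgraph on `W`). -/
def IrreducibleOn (W : Set Γ.V) : Prop :=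
  (∀ v ∈ W, ∀ w ∈ W, ∃ α : Γ.FinPath,
      α.start = v ∧ Γ.pathEnd α = w ∧ α.edges ≠ [] ∧ Γ.PathIn W α) ∧
  ¬∀ v ∈ W, ∃! e : Γ.E, Γ.InducedEdge W e ∧ Γ.o e = v

/-- `Σ_Γ` has an irreducible core: an induced subgraph `Γ₀` (on a node set `W`) with
`Σ_{Γ₀}` irreducible, such that every node has a directed path to `Γ₀` and every
sufficiently long directed path ends in `Γ₀`. -/
def HasIrreducibleCore : Prop :=
  ∃ W : Set Γ.V, Γ.IrreducibleOn W ∧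
    (∀ v : Γ.V, ∃ α : Γ.FinPath, α.start = v ∧ Γ.pathEnd α ∈ W) ∧
    ∃ N : ℕ, ∀ α : Γ.FinPath, α.edges.length = N → Γ.pathEnd α ∈ W

/-- `G ≤ R_{Γ,E}` is contracting: `Σ_Γ` has an irreducible core and the nucleus `𝒩_G`
is finite. -/
def IsContracting (E : Set (ℕ → Γ.E)) (G : Subgroup (Equiv.Perm ↥E)) : Prop :=
  Γ.HasIrreducibleCore ∧ (Γ.groupNucleus E G).Finite

/-- An element of the Thompson group `V_{Γ,E}`: there are partitions of `E` into cones
`C_{α_1},…,C_{α_k}` and `C_{β_1},…,C_{β_k}` with `t(α_i) = t(β_i)` such that `g` maps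
each `C_{α_i}` to `C_{β_i}` by the canonical similarity. -/
def IsThompson (E : Set (ℕ → Γ.E)) (g : Equiv.Perm ↥E) : Prop :=
  ∃ (k : ℕ) (α β : Fin k → Γ.FinPath),
    (∀ i, Γ.pathEnd (α i) = Γ.pathEnd (β i)) ∧
    E = (⋃ i, Γ.cone (α i)) ∧
    Pairwise (fun i j => Disjoint (Γ.cone (α i)) (Γ.cone (α j))) ∧
    E = (⋃ i, Γ.cone (β i)) ∧
    Pairwise (fun i j => Disjoint (Γ.cone (β i)) (Γ.cone (β j))) ∧
    ∀ i, Γ.RealizesCanonSim E g (α i) (β i)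

/-- A rational (eventually repeating) point `σ·τ^∞` of `Σ_Γ`. -/
def IsRationalPt (x : ℕ → Γ.E) : Prop :=
  ∃ σ τ : Γ.FinPath, τ.edges ≠ [] ∧
    (∀ (i : ℕ) (h : i < σ.edges.length), x i = σ.edges.get ⟨i, h⟩) ∧
    ∀ i : ℕ, σ.edges.length ≤ i →
      ∀ h : (i - σ.edges.length) % τ.edges.length < τ.edges.length,
        x i = τ.edges.get ⟨(i - σ.edges.length) % τ.edges.length, h⟩

/-- `β = f̄(α)`: the cone `C_β` is the smallest cone containing `f(C_α)`, with `β` the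
greatest common prefix of the points of `f(C_α)`. -/
def IsBar (f : (ℕ → Γ.E) → ℕ → Γ.E) (α β : Γ.FinPath) : Prop :=
  f '' Γ.cone α ⊆ Γ.cone β ∧
  ∀ γ : Γ.FinPath, f '' Γ.cone α ⊆ Γ.cone γ →
    Γ.cone β ⊆ Γ.cone γ ∧ γ.edges.length ≤ β.edges.length

end FinDigraph

/-!
Attach to a finite family of cones the multiset of termini of its paths. Splitting a cone `C_γ`
into the cones `C_{γe}` replaces `t(γ)` by the termini of the edges leaving it. This expansion is
confluent, so joinability is a congruence on multisets of nodes, and any two cone partitions of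
the same clopen set have joinable multisets (refine both to a common depth).

Partition `E \ ⋃ C_{α_i}` and `E \ ⋃ C_{β_i}` into cones, with multisets `s` and `s'`. As the
`α_i` and `β_i` have the same termini `t`, the classes satisfy `[s] + [t] = [s'] + [t]`. The
irreducible core makes this cancellable: after `N` expansions all nodes lie in the core, where a
branching node `v` satisfies `[v] = 2[v] + r`, so a nonzero class of the core absorbs any other
class of the core as a summand; and `x + y = x' + y`, `x = x' + y + c`, `x' = x + y + d` force
`x = x'`. A common expansion of `s` and `s'` is realized by cone partitions of the two
complements with matching termini, and the canonical similarities between matched cones, together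
with `C_{α_i} → C_{β_i}`, form the required element of `V_{Γ,E}`.
-/

theorem eq_of_add_eq_add_of_exists_eq_add {M : Type*} [AddCommMonoid M] {x x' y : M}
    (h : x + y = x' + y) (hx : ∃ c, x = x' + y + c) (hx' : ∃ d, x' = x + y + d) : x = x' := by
  obtain ⟨c, hc⟩ := hx
  obtain ⟨d, hd⟩ := hx'
  have habsorb : x + y + (y + c) = x + y := by
    calc x + y + (y + c) = x' + y + c + y := by rw [h]; abel
      _ = x + y := by rw [← hc]
  calc x = x' + y + c := hc
    _ = x + y + (y + c) + d := by rw [hd]; abel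
    _ = x' := by rw [habsorb, hd]

theorem Fintype.card_subtype_eq_count_map {α γ : Type*} [Fintype α] (f : α → γ) (c : γ) :
    Fintype.card {a // f a = c} = (Finset.univ.val.map f).count c := by
  simp [Fintype.card_subtype, Multiset.count_map, eq_comm, Finset.card_def, Finset.filter_val]

theorem Fintype.exists_equiv_of_map_univ_eq {α β γ : Type*} [Fintype α] [Fintype β]
    {f : α → γ} {g : β → γ} (h : Finset.univ.val.map f = Finset.univ.val.map g) :
    ∃ e : α ≃ β, ∀ a, g (e a) = f a := by
  have hcard : ∀ c, Fintype.card {a // f a = c} = Fintype.card {b // g b = c} := fun c => by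
    rw [card_subtype_eq_count_map, card_subtype_eq_count_map, h]
  exact ⟨(Equiv.sigmaFiberEquiv f).symm.trans <|
      (Equiv.sigmaCongrRight fun c => Fintype.equivOfCardEq (hcard c)).trans
        (Equiv.sigmaFiberEquiv g),
    fun a => (Fintype.equivOfCardEq (hcard (f a)) ⟨a, rfl⟩).2⟩

namespace FinDigraph

variable {Γ : FinDigraph}

theorem FinPath.ext {γ δ : Γ.FinPath} (h₁ : γ.start = δ.start) (h₂ : γ.edges = δ.edges) :
    γ = δ := by
  cases γ; cases δ; simp_all

theorem pathEndAux_append (v : Γ.V) (l₁ l₂ : List Γ.E) :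
    Γ.pathEndAux v (l₁ ++ l₂) = Γ.pathEndAux (Γ.pathEndAux v l₁) l₂ := by
  induction l₁ generalizing v with
  | nil => rfl
  | cons e l ih => exact ih _

theorem pathOk_append {v : Γ.V} {l₁ l₂ : List Γ.E} :
    Γ.pathOk v (l₁ ++ l₂) ↔ Γ.pathOk v l₁ ∧ Γ.pathOk (Γ.pathEndAux v l₁) l₂ := by
  induction l₁ generalizing v with
  | nil => simp [pathOk, pathEndAux]
  | cons e l ih => simp [pathOk, pathEndAux, ih, and_assoc]

theorem o_getElem_of_pathOk {v : Γ.V} {l : List Γ.E} (hl : Γ.pathOk v l) {i : ℕ}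
    (hi : i < l.length) : Γ.o l[i] = Γ.pathEndAux v (l.take i) := by
  induction l generalizing v i with
  | nil => simp at hi
  | cons e l ih =>
    cases i with
    | zero => exact hl.1
    | succ j => exact ih hl.2 (by simpa using hi)

theorem pathEndAux_take_succ (v : Γ.V) {l : List Γ.E} {i : ℕ} (hi : i < l.length) :
    Γ.pathEndAux v (l.take (i + 1)) = Γ.t l[i] := by
  rw [List.take_add_one, List.getElem?_eq_getElem hi, Option.toList_some, pathEndAux_append]
  rfl

theorem exists_mem_o_eq_start (γ : Γ.FinPath) (h : γ.edges ≠ []) :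
    ∃ e ∈ γ.edges, Γ.o e = γ.start := by
  obtain ⟨e, l, hl⟩ := List.exists_cons_of_ne_nil h
  have hok := γ.ok
  rw [hl] at hok
  exact ⟨e, hl ▸ List.mem_cons_self, hok.1⟩

def FinPath.concat (γ : Γ.FinPath) (e : Γ.E) (he : Γ.o e = Γ.pathEnd γ) : Γ.FinPath :=
  ⟨γ.start, γ.edges ++ [e], pathOk_append.2 ⟨γ.ok, he, trivial⟩⟩

@[simp] theorem FinPath.concat_edges (γ : Γ.FinPath) (e : Γ.E) (he) :
    (γ.concat e he).edges = γ.edges ++ [e] := rfl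

@[simp] theorem pathEnd_concat (γ : Γ.FinPath) (e : Γ.E) (he) :
    Γ.pathEnd (γ.concat e he) = Γ.t e :=
  pathEndAux_append _ _ _

theorem o_of_mem_cone {γ : Γ.FinPath} {x : ℕ → Γ.E} (hx : x ∈ Γ.cone γ) {j : ℕ}
    (hj : j ≤ γ.edges.length) : Γ.o (x j) = Γ.pathEndAux γ.start (γ.edges.take j) := by
  induction j with
  | zero => exact hx.2.1
  | succ i _ =>
    rw [← hx.1 i, hx.2.2 i hj, List.get_eq_getElem, pathEndAux_take_succ]

theorem o_length_of_mem_cone {γ : Γ.FinPath} {x : ℕ → Γ.E} (hx : x ∈ Γ.cone γ) :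
    Γ.o (x γ.edges.length) = Γ.pathEnd γ := by
  simpa [pathEnd] using o_of_mem_cone hx le_rfl

theorem eq_of_mem_cone_of_length_eq {γ δ : Γ.FinPath} (hlen : γ.edges.length = δ.edges.length)
    {x : ℕ → Γ.E} (hγ : x ∈ Γ.cone γ) (hδ : x ∈ Γ.cone δ) : γ = δ :=
  FinPath.ext (hγ.2.1.symm.trans hδ.2.1) <| List.ext_get hlen fun i h₁ h₂ => by
    rw [← hγ.2.2 i h₁, ← hδ.2.2 i h₂]

theorem mem_cone_concat_iff {γ : Γ.FinPath} {e : Γ.E} {he} {x : ℕ → Γ.E} :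
    x ∈ Γ.cone (γ.concat e he) ↔ x ∈ Γ.cone γ ∧ x γ.edges.length = e := by
  simp only [cone, Set.mem_ofPred_eq, List.length_append,
    List.length_singleton, List.get_eq_getElem, FinPath.concat]
  constructor
  · rintro ⟨hs, ho, h⟩
    refine ⟨⟨hs, ho, fun i hi => ?_⟩, by simpa using h _ (Nat.lt_succ_self _)⟩
    rw [h i (by omega), List.getElem_append_left hi]
  · rintro ⟨⟨hs, ho, h⟩, he⟩
    refine ⟨hs, ho, fun i hi => ?_⟩
    rcases Nat.lt_succ_iff_lt_or_eq.1 hi with hi | rfl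
    · rw [h i hi, List.getElem_append_left hi]
    · simpa using he

theorem splice_of_lt {α β : Γ.FinPath} {x : ℕ → Γ.E} {i : ℕ} (h : i < β.edges.length) :
    Γ.splice α β x i = β.edges.get ⟨i, h⟩ := dif_pos h

theorem splice_of_le {α β : Γ.FinPath} {x : ℕ → Γ.E} {i : ℕ} (h : β.edges.length ≤ i) :
    Γ.splice α β x i = x (i - β.edges.length + α.edges.length) := dif_neg (by omega)

theorem splice_mem_shift {α β : Γ.FinPath} (hend : Γ.pathEnd α = Γ.pathEnd β)
    {x : ℕ → Γ.E} (hx : x ∈ Γ.cone α) : Γ.splice α β x ∈ Γ.shift := by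
  set b := β.edges.length
  have hβend : Γ.pathEndAux β.start (β.edges.take b) = Γ.o (x α.edges.length) := by
    rw [List.take_length, o_length_of_mem_cone hx, hend, pathEnd]
  intro i
  rcases lt_trichotomy (i + 1) b with h | h | h
  · rw [splice_of_lt (by omega), splice_of_lt h, List.get_eq_getElem, List.get_eq_getElem,
      o_getElem_of_pathOk β.ok h, pathEndAux_take_succ]
  · rw [splice_of_lt (by omega), splice_of_le h.ge, List.get_eq_getElem,
      ← pathEndAux_take_succ β.start, h, hβend, Nat.sub_self, Nat.zero_add]
  · rw [splice_of_le (by omega), splice_of_le (by omega),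
      show i + 1 - b + α.edges.length = i - b + α.edges.length + 1 by omega]
    exact hx.1 _

theorem splice_mem_cone {α β : Γ.FinPath} (hend : Γ.pathEnd α = Γ.pathEnd β)
    {x : ℕ → Γ.E} (hx : x ∈ Γ.cone α) : Γ.splice α β x ∈ Γ.cone β := by
  refine ⟨splice_mem_shift hend hx, ?_, fun i h => splice_of_lt h⟩
  rcases Nat.eq_zero_or_pos β.edges.length with h0 | h0
  · rw [splice_of_le h0.le, h0, Nat.sub_zero, Nat.zero_add, o_length_of_mem_cone hx, hend,
      pathEnd, List.length_eq_zero_iff.1 h0]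
    rfl
  · rw [splice_of_lt h0, List.get_eq_getElem, o_getElem_of_pathOk β.ok h0]
    rfl

theorem splice_splice {α β : Γ.FinPath} {x : ℕ → Γ.E} (hx : x ∈ Γ.cone α) :
    Γ.splice β α (Γ.splice α β x) = x := by
  funext i
  rcases lt_or_ge i α.edges.length with h | h
  · rw [splice_of_lt h, hx.2.2 i h]
  · rw [splice_of_le h, splice_of_le (by omega), show i - α.edges.length + β.edges.length -
      β.edges.length + α.edges.length = i by omega]

theorem exists_mem_cone_length_eq {x : ℕ → Γ.E} (hx : x ∈ Γ.shift) (n : ℕ) :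
    ∃ γ : Γ.FinPath, γ.edges.length = n ∧ x ∈ Γ.cone γ := by
  induction n with
  | zero => exact ⟨Γ.trivPath (Γ.o (x 0)), rfl, hx, rfl, fun i h => absurd h (Nat.not_lt_zero i)⟩
  | succ n ih =>
    obtain ⟨γ, rfl, hxγ⟩ := ih
    exact ⟨γ.concat _ (o_length_of_mem_cone hxγ), by simp, mem_cone_concat_iff.2 ⟨hxγ, rfl⟩⟩

theorem NoEmptyCones.exists_o_eq (hne : Γ.NoEmptyCones) (v : Γ.V) : ∃ e, Γ.o e = v :=
  let ⟨x, hx⟩ := hne (Γ.trivPath v)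
  ⟨x 0, hx.2.1⟩

theorem noEmptyCones_of_forall_exists_o (hout : ∀ v, ∃ e, Γ.o e = v) : Γ.NoEmptyCones := by
  choose next hnext using hout
  intro γ
  let x : ℕ → Γ.E := fun n => Nat.rec (next (Γ.pathEnd γ)) (fun _ e => next (Γ.t e)) n
  have hx : x ∈ Γ.cone (Γ.trivPath (Γ.pathEnd γ)) :=
    ⟨fun i => (hnext _).symm, hnext _, fun i h => absurd h (Nat.not_lt_zero i)⟩
  exact ⟨_, splice_mem_cone (α := Γ.trivPath (Γ.pathEnd γ)) (β := γ) rfl hx⟩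

theorem IrreducibleOn.exists_edge {W : Set Γ.V} (hirr : Γ.IrreducibleOn W) {v : Γ.V}
    (hv : v ∈ W) : ∃ e, Γ.InducedEdge W e ∧ Γ.o e = v := by
  obtain ⟨γ, rfl, -, hne, -, hγW⟩ := hirr.1 v hv v hv
  obtain ⟨e, he, heo⟩ := exists_mem_o_eq_start γ hne
  exact ⟨e, hγW e he, heo⟩

theorem IrreducibleOn.exists_branch {W : Set Γ.V} (hirr : Γ.IrreducibleOn W) :
    ∃ v ∈ W, ∃ e₁ e₂, e₁ ≠ e₂ ∧ Γ.InducedEdge W e₁ ∧ Γ.InducedEdge W e₂ ∧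
      Γ.o e₁ = v ∧ Γ.o e₂ = v := by
  obtain ⟨v, hv, hnu⟩ := not_forall₂.1 hirr.2
  obtain ⟨e, he, heo⟩ := hirr.exists_edge hv
  obtain ⟨e', ⟨he', he'o⟩, hne⟩ : ∃ e', (Γ.InducedEdge W e' ∧ Γ.o e' = v) ∧ e' ≠ e := by
    by_contra! h
    exact hnu ⟨e, ⟨he, heo⟩, h⟩
  exact ⟨v, hv, e', e, hne, he', he, he'o, heo⟩

theorem HasIrreducibleCore.noEmptyCones (hcore : Γ.HasIrreducibleCore) : Γ.NoEmptyCones := by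
  obtain ⟨W, hirr, hreach, -⟩ := hcore
  refine noEmptyCones_of_forall_exists_o fun v => ?_
  obtain ⟨γ, rfl, hγW⟩ := hreach v
  by_cases hγ : γ.edges = []
  · have hv : γ.start ∈ W := by rwa [pathEnd, hγ] at hγW
    obtain ⟨e, -, he⟩ := hirr.exists_edge hv
    exact ⟨e, he⟩
  · obtain ⟨e, -, he⟩ := exists_mem_o_eq_start γ hγ
    exact ⟨e, he⟩

variable (Γ) in
def outTargets (v : Γ.V) : Multiset Γ.V := ∑ e : {e // Γ.o e = v}, {Γ.t e}

theorem mem_outTargets {v w : Γ.V} : w ∈ Γ.outTargets v ↔ ∃ e, Γ.o e = v ∧ Γ.t e = w := by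
  simp [outTargets, Multiset.mem_sum, eq_comm]

variable (Γ) in
/-- On the multisets of termini of cone partitions, this is the splitting of one cone `C_γ` into
the cones `C_{γe}`. -/
def ExpandStep (s t : Multiset Γ.V) : Prop :=
  ∃ v s', s = v ::ₘ s' ∧ t = s' + Γ.outTargets v

variable (Γ) in
abbrev Expands : Multiset Γ.V → Multiset Γ.V → Prop := Relation.ReflTransGen Γ.ExpandStep

theorem expandStep_diamond (a b c : Multiset Γ.V) (hab : Γ.ExpandStep a b)
    (hac : Γ.ExpandStep a c) : ∃ d, Relation.ReflGen Γ.ExpandStep b d ∧ Γ.Expands c d := by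
  obtain ⟨u, s, rfl, rfl⟩ := hab
  obtain ⟨w, s', h, rfl⟩ := hac
  rcases Multiset.cons_eq_cons.1 h with ⟨rfl, rfl⟩ | ⟨-, r, rfl, rfl⟩
  · exact ⟨_, .refl, .refl⟩
  · exact ⟨r + Γ.outTargets u + Γ.outTargets w, .single ⟨w, r + Γ.outTargets u, by simp, rfl⟩,
      .single ⟨u, r + Γ.outTargets w, by simp, add_right_comm _ _ _⟩⟩

theorem Expands.add_right {s t : Multiset Γ.V} (h : Γ.Expands s t) (r : Multiset Γ.V) :
    Γ.Expands (s + r) (t + r) := by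
  induction h with
  | refl => exact .refl
  | tail _ hstep ih =>
    obtain ⟨v, s', rfl, rfl⟩ := hstep
    exact ih.tail ⟨v, s' + r, Multiset.cons_add _ _ _, add_right_comm _ _ _⟩

theorem Expands.add_left {s t : Multiset Γ.V} (h : Γ.Expands s t) (r : Multiset Γ.V) :
    Γ.Expands (r + s) (r + t) := by
  simpa only [add_comm r] using h.add_right r

variable (Γ) in
/-- Its quotient is the graph monoid of `Γ`, generated by the nodes subject to
`v = ∑_{o(e) = v} t(e)`. -/
def expansionCon : AddCon (Multiset Γ.V) where
  r := Relation.Join Γ.Expands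
  iseqv := Relation.equivalence_join_reflTransGen expandStep_diamond
  add' := by
    rintro a b c d ⟨x, hax, hbx⟩ ⟨y, hcy, hdy⟩
    exact ⟨x + y, (hax.add_right c).trans (hcy.add_left x),
      (hbx.add_right d).trans (hdy.add_left x)⟩

theorem expands_singleton (v : Γ.V) : Γ.Expands {v} (Γ.outTargets v) :=
  .single ⟨v, 0, rfl, (zero_add _).symm⟩

theorem Expands.mk'_eq {s t : Multiset Γ.V} (h : Γ.Expands s t) :
    Γ.expansionCon.mk' s = Γ.expansionCon.mk' t :=
  (AddCon.eq _).2 ⟨t, h, .refl⟩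

variable (Γ) in
def expandAll : AddMonoid.End (Multiset Γ.V) where
  toFun s := s.bind Γ.outTargets
  map_zero' := Multiset.zero_bind _
  map_add' s t := Multiset.add_bind s t _

theorem expandAll_singleton (v : Γ.V) : Γ.expandAll {v} = Γ.outTargets v :=
  Multiset.singleton_bind _ _

theorem expands_expandAll (s : Multiset Γ.V) : Γ.Expands s (Γ.expandAll s) := by
  induction s using Multiset.induction with
  | empty => exact .refl
  | cons v s ih =>
    have hstep : Γ.ExpandStep (v ::ₘ s) (s + Γ.outTargets v) := ⟨v, s, rfl, rfl⟩
    have hexp : Γ.expandAll (v ::ₘ s) = Γ.expandAll s + Γ.outTargets v := by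
      rw [← Multiset.singleton_add, map_add, expandAll_singleton, add_comm]
    rw [hexp]
    exact .head hstep (ih.add_right _)

theorem expands_expandAll_pow (m : ℕ) (s : Multiset Γ.V) :
    Γ.Expands s ((Γ.expandAll ^ m) s) := by
  induction m with
  | zero => exact .refl
  | succ m ih =>
    rw [pow_succ', AddMonoid.End.coe_mul, Function.comp_apply]
    exact ih.trans (expands_expandAll _)

theorem exists_path_of_mem_expandAll_pow {m : ℕ} {s : Multiset Γ.V} {w : Γ.V}
    (hw : w ∈ (Γ.expandAll ^ m) s) :
    ∃ γ : Γ.FinPath, γ.start ∈ s ∧ γ.edges.length = m ∧ Γ.pathEnd γ = w := by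
  induction m generalizing w with
  | zero => exact ⟨Γ.trivPath w, hw, rfl, rfl⟩
  | succ m ih =>
    rw [pow_succ', AddMonoid.End.coe_mul, Function.comp_apply] at hw
    obtain ⟨u, hu, hwu⟩ := Multiset.mem_bind.1 hw
    obtain ⟨e, rfl, rfl⟩ := mem_outTargets.1 hwu
    obtain ⟨γ, hγs, rfl, hγe⟩ := ih hu
    exact ⟨γ.concat e hγe.symm, hγs, by simp, by simp⟩

theorem expandAll_pow_ne_zero (hne : Γ.NoEmptyCones) {s : Multiset Γ.V} (hs : s ≠ 0)
    (m : ℕ) : (Γ.expandAll ^ m) s ≠ 0 := by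
  induction m with
  | zero => exact hs
  | succ m ih =>
    obtain ⟨u, hu⟩ := Multiset.exists_mem_of_ne_zero ih
    obtain ⟨e, he⟩ := hne.exists_o_eq u
    rw [pow_succ', AddMonoid.End.coe_mul, Function.comp_apply]
    exact ne_of_mem_of_not_mem' (Multiset.mem_bind.2 ⟨u, hu, mem_outTargets.2 ⟨e, he, rfl⟩⟩)
      (Multiset.notMem_zero _)

theorem exists_mk'_start_eq_add (γ : Γ.FinPath) :
    ∃ r, Γ.expansionCon.mk' {γ.start} = Γ.expansionCon.mk' {Γ.pathEnd γ} + r := by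
  obtain ⟨v, l, hl⟩ := γ
  induction l generalizing v with
  | nil => exact ⟨0, (add_zero _).symm⟩
  | cons e l ih =>
    obtain ⟨r, hr⟩ := ih (Γ.t e) hl.2
    obtain ⟨rest, hrest⟩ := Multiset.exists_cons_of_mem (mem_outTargets.2 ⟨e, hl.1, rfl⟩)
    refine ⟨r + Γ.expansionCon.mk' rest, ?_⟩
    rw [(expands_singleton v).mk'_eq, hrest, ← Multiset.singleton_add, map_add, hr, add_assoc]
    rfl

theorem IrreducibleOn.exists_mk'_singleton_eq_singleton_add {W : Set Γ.V}
    (hirr : Γ.IrreducibleOn W) {u w : Γ.V} (hu : u ∈ W) (hw : w ∈ W) :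
    ∃ r, Γ.expansionCon.mk' {u} = Γ.expansionCon.mk' {w} + r := by
  obtain ⟨γ, rfl, rfl, -⟩ := hirr.1 u hu w hw
  exact exists_mk'_start_eq_add γ

theorem IrreducibleOn.exists_mk'_singleton_eq_add_add {W : Set Γ.V}
    (hirr : Γ.IrreducibleOn W) :
    ∃ v ∈ W, ∃ r, Γ.expansionCon.mk' {v} =
      Γ.expansionCon.mk' {v} + Γ.expansionCon.mk' {v} + r := by
  obtain ⟨v, hv, e₁, e₂, hne, h₁, h₂, ho₁, ho₂⟩ := hirr.exists_branch
  obtain ⟨r₁, hr₁⟩ := hirr.exists_mk'_singleton_eq_singleton_add h₁.2 hv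
  obtain ⟨r₂, hr₂⟩ := hirr.exists_mk'_singleton_eq_singleton_add h₂.2 hv
  set a₁ : {e // Γ.o e = v} := ⟨e₁, ho₁⟩
  set a₂ : {e // Γ.o e = v} := ⟨e₂, ho₂⟩
  have hpair : ∑ a ∈ {a₁, a₂}, ({Γ.t a} : Multiset Γ.V) = {Γ.t e₁} + {Γ.t e₂} :=
    Finset.sum_pair fun h => hne (congrArg Subtype.val h)
  refine ⟨v, hv, r₁ + r₂ + Γ.expansionCon.mk' (∑ a ∈ Finset.univ \ {a₁, a₂}, {Γ.t a}), ?_⟩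
  calc Γ.expansionCon.mk' {v} = Γ.expansionCon.mk' (Γ.outTargets v) := (expands_singleton v).mk'_eq
    _ = Γ.expansionCon.mk' {Γ.t e₁} + Γ.expansionCon.mk' {Γ.t e₂} +
        Γ.expansionCon.mk' (∑ a ∈ Finset.univ \ {a₁, a₂}, {Γ.t a}) := by
      rw [outTargets, ← Finset.sum_sdiff (Finset.subset_univ {a₁, a₂}), hpair, map_add,
        map_add, add_comm]
    _ = _ := by rw [hr₁, hr₂]; abel

theorem IrreducibleOn.exists_mk'_singleton_eq_add {W : Set Γ.V} (hirr : Γ.IrreducibleOn W)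
    {u : Γ.V} (hu : u ∈ W) {R : Multiset Γ.V} (hR : ∀ w ∈ R, w ∈ W) :
    ∃ j, Γ.expansionCon.mk' {u} = Γ.expansionCon.mk' R + j := by
  obtain ⟨v, hv, b, hb⟩ := hirr.exists_mk'_singleton_eq_add_add
  induction R using Multiset.induction generalizing u with
  | empty => exact ⟨Γ.expansionCon.mk' {u}, by simp⟩
  | cons w R ih =>
    obtain ⟨a, ha⟩ := hirr.exists_mk'_singleton_eq_singleton_add hu hv
    obtain ⟨c, hc⟩ := hirr.exists_mk'_singleton_eq_singleton_add hv
      (hR w (Multiset.mem_cons_self _ _))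
    obtain ⟨j, hj⟩ := ih hv fun x hx => hR x (Multiset.mem_cons_of_mem hx)
    refine ⟨c + j + b + a, ?_⟩
    calc Γ.expansionCon.mk' {u} = Γ.expansionCon.mk' {v} + a := ha
      _ = Γ.expansionCon.mk' {v} + Γ.expansionCon.mk' {v} + b + a := by rw [← hb]
      _ = Γ.expansionCon.mk' {w} + c + (Γ.expansionCon.mk' R + j) + b + a := by
        rw [← hc, ← hj]
      _ = _ := by rw [← Multiset.singleton_add, map_add]; abel

theorem IrreducibleOn.exists_mk'_eq_add {W : Set Γ.V} (hirr : Γ.IrreducibleOn W)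
    {s : Multiset Γ.V} (hs : s ≠ 0) (hsW : ∀ w ∈ s, w ∈ W) {R : Multiset Γ.V}
    (hR : ∀ w ∈ R, w ∈ W) :
    ∃ j, Γ.expansionCon.mk' s = Γ.expansionCon.mk' R + j := by
  obtain ⟨u, hu⟩ := Multiset.exists_mem_of_ne_zero hs
  obtain ⟨s', rfl⟩ := Multiset.exists_cons_of_mem hu
  obtain ⟨j, hj⟩ := hirr.exists_mk'_singleton_eq_add (hsW u hu) hR
  exact ⟨j + Γ.expansionCon.mk' s', by rw [← Multiset.singleton_add, map_add, hj, add_assoc]⟩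

theorem HasIrreducibleCore.mk'_cancel (hcore : Γ.HasIrreducibleCore) {s s' t : Multiset Γ.V}
    (hs : s ≠ 0) (hs' : s' ≠ 0) (h : Γ.expansionCon.mk' (s + t) = Γ.expansionCon.mk' (s' + t)) :
    Γ.expansionCon.mk' s = Γ.expansionCon.mk' s' := by
  have hne := hcore.noEmptyCones
  obtain ⟨W, hirr, -, N, hN⟩ := hcore
  set F := Γ.expandAll ^ N
  have hF : ∀ x, Γ.expansionCon.mk' x = Γ.expansionCon.mk' (F x) := fun x =>
    (expands_expandAll_pow N x).mk'_eq
  have hFW : ∀ x, ∀ w ∈ F x, w ∈ W := fun x w hw => by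
    obtain ⟨γ, -, hγ, rfl⟩ := exists_path_of_mem_expandAll_pow hw
    exact hN γ hγ
  have hFW₂ : ∀ x y, ∀ w ∈ F x + F y, w ∈ W := fun x y w hw =>
    (Multiset.mem_add.1 hw).elim (hFW x w) (hFW y w)
  rw [map_add, map_add, hF s, hF s', hF t] at h
  rw [hF s, hF s']
  refine eq_of_add_eq_add_of_exists_eq_add h ?_ ?_
  · obtain ⟨c, hc⟩ := hirr.exists_mk'_eq_add (expandAll_pow_ne_zero hne hs N) (hFW s) (hFW₂ s' t)
    exact ⟨c, by rw [hc, map_add]⟩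
  · obtain ⟨c, hc⟩ := hirr.exists_mk'_eq_add (expandAll_pow_ne_zero hne hs' N) (hFW s') (hFW₂ s t)
    exact ⟨c, by rw [hc, map_add]⟩

variable (Γ) in
def IsConePartition (L : Finset Γ.FinPath) (D : Set (ℕ → Γ.E)) : Prop :=
  (⋃ γ ∈ L, Γ.cone γ) = D ∧ (L : Set Γ.FinPath).PairwiseDisjoint Γ.cone

variable (Γ) in
def coneType (L : Finset Γ.FinPath) : Multiset Γ.V := ∑ γ ∈ L, {Γ.pathEnd γ}

theorem IsConePartition.cone_subset {L : Finset Γ.FinPath} {D : Set (ℕ → Γ.E)}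
    (hL : Γ.IsConePartition L D) {γ : Γ.FinPath} (hγ : γ ∈ L) : Γ.cone γ ⊆ D :=
  hL.1 ▸ Set.subset_biUnion_of_mem (u := Γ.cone) (Finset.mem_coe.2 hγ)

theorem IsConePartition.coneType_ne_zero {L : Finset Γ.FinPath} {D : Set (ℕ → Γ.E)}
    (hL : Γ.IsConePartition L D) (hD : D.Nonempty) : Γ.coneType L ≠ 0 := by
  obtain ⟨x, hx⟩ := hD
  rw [← hL.1, Set.mem_iUnion₂] at hx
  obtain ⟨γ, hγ, -⟩ := hx
  simpa [coneType, Finset.sum_eq_zero_iff] using ⟨γ, hγ⟩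

theorem isConePartition_singleton (γ : Γ.FinPath) : Γ.IsConePartition {γ} (Γ.cone γ) := by
  simp [IsConePartition]

variable (Γ) in
def children (γ : Γ.FinPath) : Finset Γ.FinPath :=
  Finset.univ.map ⟨fun e : {e // Γ.o e = Γ.pathEnd γ} => γ.concat e.1 e.2, fun e₁ e₂ h =>
    Subtype.ext (by simpa using congrArg FinPath.edges h)⟩

theorem mem_children {γ δ : Γ.FinPath} :
    δ ∈ Γ.children γ ↔ ∃ e he, γ.concat e he = δ := by
  simp only [children, Finset.mem_map, Finset.mem_univ, true_and, Subtype.exists]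
  rfl

theorem length_of_mem_children {γ δ : Γ.FinPath} (h : δ ∈ Γ.children γ) :
    δ.edges.length = γ.edges.length + 1 := by
  obtain ⟨e, he, rfl⟩ := mem_children.1 h
  simp

theorem coneType_children (γ : Γ.FinPath) :
    Γ.coneType (Γ.children γ) = Γ.outTargets (Γ.pathEnd γ) := by
  rw [coneType, children, Finset.sum_map]
  exact Finset.sum_congr rfl fun e _ => by rw [← pathEnd_concat γ e.1 e.2]; rfl

theorem isConePartition_children (γ : Γ.FinPath) :
    Γ.IsConePartition (Γ.children γ) (Γ.cone γ) := by
  refine ⟨Set.Subset.antisymm (Set.iUnion₂_subset fun δ hδ => ?_) fun x hx => ?_, ?_⟩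
  · obtain ⟨e, he, rfl⟩ := mem_children.1 hδ
    exact fun x hx => (mem_cone_concat_iff.1 hx).1
  · exact Set.mem_biUnion (mem_children.2 ⟨_, o_length_of_mem_cone hx, rfl⟩)
      (mem_cone_concat_iff.2 ⟨hx, rfl⟩)
  · intro δ₁ hδ₁ δ₂ hδ₂ hne
    obtain ⟨e₁, he₁, rfl⟩ := mem_children.1 hδ₁
    obtain ⟨e₂, he₂, rfl⟩ := mem_children.1 hδ₂
    refine Set.disjoint_left.2 fun x hx₁ hx₂ => hne ?_
    obtain rfl : e₁ = e₂ := (mem_cone_concat_iff.1 hx₁).2.symm.trans (mem_cone_concat_iff.1 hx₂).2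
    rfl

theorem IsConePartition.biUnion (hne : Γ.NoEmptyCones) {L : Finset Γ.FinPath}
    {D : Set (ℕ → Γ.E)} (hL : Γ.IsConePartition L D) {K : Γ.FinPath → Finset Γ.FinPath}
    (hK : ∀ γ ∈ L, Γ.IsConePartition (K γ) (Γ.cone γ)) :
    Γ.IsConePartition (L.biUnion K) D ∧
      Γ.coneType (L.biUnion K) = ∑ γ ∈ L, Γ.coneType (K γ) := by
  have hdisj : ∀ γ₁ ∈ L, ∀ γ₂ ∈ L, γ₁ ≠ γ₂ → ∀ δ₁ ∈ K γ₁, ∀ δ₂ ∈ K γ₂,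
      Disjoint (Γ.cone δ₁) (Γ.cone δ₂) := fun γ₁ h₁ γ₂ h₂ hγ δ₁ hδ₁ δ₂ hδ₂ =>
    (hL.2 h₁ h₂ hγ).mono ((hK γ₁ h₁).cone_subset hδ₁) ((hK γ₂ h₂).cone_subset hδ₂)
  have hKdisj : (L : Set Γ.FinPath).PairwiseDisjoint K := fun γ₁ h₁ γ₂ h₂ hγ =>
    Finset.disjoint_left.2 fun δ hδ₁ hδ₂ =>
      let ⟨_, hx⟩ := hne δ
      Set.disjoint_left.1 (hdisj γ₁ h₁ γ₂ h₂ hγ δ hδ₁ δ hδ₂) hx hx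
  refine ⟨⟨?_, fun δ₁ hδ₁ δ₂ hδ₂ hδ => ?_⟩, Finset.sum_biUnion hKdisj⟩
  · rw [Finset.set_biUnion_biUnion, ← hL.1]
    exact Set.iUnion₂_congr fun γ hγ => (hK γ hγ).1
  · obtain ⟨γ₁, h₁, hδ₁⟩ := Finset.mem_biUnion.1 hδ₁
    obtain ⟨γ₂, h₂, hδ₂⟩ := Finset.mem_biUnion.1 hδ₂
    by_cases hγ : γ₁ = γ₂
    · subst hγ
      exact (hK γ₁ h₁).2 hδ₁ hδ₂ hδ
    · exact hdisj γ₁ h₁ γ₂ h₂ hγ δ₁ hδ₁ δ₂ hδ₂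

theorem IsConePartition.union (hne : Γ.NoEmptyCones) {L₁ L₂ : Finset Γ.FinPath}
    {D₁ D₂ : Set (ℕ → Γ.E)} (h₁ : Γ.IsConePartition L₁ D₁) (h₂ : Γ.IsConePartition L₂ D₂)
    (hD : Disjoint D₁ D₂) :
    Γ.IsConePartition (L₁ ∪ L₂) (D₁ ∪ D₂) ∧
      Γ.coneType (L₁ ∪ L₂) = Γ.coneType L₁ + Γ.coneType L₂ := by
  have hdisj : ∀ γ₁ ∈ L₁, ∀ γ₂ ∈ L₂, Disjoint (Γ.cone γ₁) (Γ.cone γ₂) := fun γ₁ hγ₁ γ₂ hγ₂ =>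
    hD.mono (h₁.cone_subset hγ₁) (h₂.cone_subset hγ₂)
  have hL : Disjoint L₁ L₂ := Finset.disjoint_left.2 fun γ hγ₁ hγ₂ =>
    let ⟨_, hx⟩ := hne γ
    Set.disjoint_left.1 (hdisj γ hγ₁ γ hγ₂) hx hx
  refine ⟨⟨by rw [Finset.set_biUnion_union, h₁.1, h₂.1], ?_⟩, Finset.sum_union hL⟩
  rw [Finset.coe_union, Set.pairwiseDisjoint_union]
  exact ⟨h₁.2, h₂.2, fun γ₁ hγ₁ γ₂ hγ₂ _ => hdisj γ₁ hγ₁ γ₂ hγ₂⟩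

theorem IsConePartition.exists_of_expandStep (hne : Γ.NoEmptyCones) {L : Finset Γ.FinPath}
    {D : Set (ℕ → Γ.E)} (hL : Γ.IsConePartition L D) {s : Multiset Γ.V}
    (h : Γ.ExpandStep (Γ.coneType L) s) :
    ∃ L', Γ.IsConePartition L' D ∧ Γ.coneType L' = s := by
  obtain ⟨u, s', hLs, rfl⟩ := h
  obtain ⟨γ, hγ, rfl⟩ : ∃ γ ∈ L, Γ.pathEnd γ = u := by
    have hu : u ∈ Γ.coneType L := hLs ▸ Multiset.mem_cons_self u s'
    simpa [coneType, Multiset.mem_sum, eq_comm] using hu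
  have hs' : s' = ∑ δ ∈ L.erase γ, {Γ.pathEnd δ} := by
    rw [coneType, ← Finset.add_sum_erase _ _ hγ, Multiset.singleton_add] at hLs
    exact (Multiset.cons_inj_right _).1 hLs.symm
  let K δ := if δ = γ then Γ.children γ else {δ}
  have hK : ∀ δ ∈ L, Γ.IsConePartition (K δ) (Γ.cone δ) := fun δ _ => by
    by_cases hδ : δ = γ
    · simpa [K, hδ] using isConePartition_children γ
    · simpa [K, hδ] using isConePartition_singleton δ
  obtain ⟨hpart, htype⟩ := hL.biUnion hne hK
  refine ⟨_, hpart, ?_⟩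
  rw [htype, ← Finset.add_sum_erase _ _ hγ, hs', add_comm]
  simp only [K, if_pos rfl, coneType_children]
  congr 1
  exact Finset.sum_congr rfl fun δ hδ => by simp [if_neg (Finset.ne_of_mem_erase hδ), coneType]

theorem IsConePartition.exists_of_expands (hne : Γ.NoEmptyCones) {L : Finset Γ.FinPath}
    {D : Set (ℕ → Γ.E)} (hL : Γ.IsConePartition L D) {s : Multiset Γ.V}
    (h : Γ.Expands (Γ.coneType L) s) :
    ∃ L', Γ.IsConePartition L' D ∧ Γ.coneType L' = s := by
  induction h with
  | refl => exact ⟨L, hL, rfl⟩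
  | tail _ hstep ih =>
    obtain ⟨L', hL', rfl⟩ := ih
    exact hL'.exists_of_expandStep hne hstep

variable (Γ) in
def extensions : ℕ → Γ.FinPath → Finset Γ.FinPath
  | 0, γ => {γ}
  | m + 1, γ => (Γ.children γ).biUnion (extensions m)

theorem length_of_mem_extensions {m : ℕ} {γ δ : Γ.FinPath} (h : δ ∈ Γ.extensions m γ) :
    δ.edges.length = γ.edges.length + m := by
  induction m generalizing γ with
  | zero => simp_all [extensions]
  | succ m ih =>
    obtain ⟨c, hc, hδ⟩ := Finset.mem_biUnion.1 h
    rw [ih hδ, length_of_mem_children hc]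
    ring

theorem isConePartition_extensions (hne : Γ.NoEmptyCones) (m : ℕ) (γ : Γ.FinPath) :
    Γ.IsConePartition (Γ.extensions m γ) (Γ.cone γ) ∧
      Γ.coneType (Γ.extensions m γ) = (Γ.expandAll ^ m) {Γ.pathEnd γ} := by
  induction m generalizing γ with
  | zero => exact ⟨isConePartition_singleton γ, by simp [extensions, coneType]⟩
  | succ m ih =>
    obtain ⟨hpart, htype⟩ := (isConePartition_children γ).biUnion hne fun δ _ => (ih δ).1
    refine ⟨hpart, ?_⟩
    rw [extensions, htype, Finset.sum_congr rfl fun δ _ => (ih δ).2, ← map_sum, pow_succ,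
      AddMonoid.End.coe_mul, Function.comp_apply, expandAll_singleton, ← coneType_children]
    rfl

theorem IsConePartition.exists_refinement (hne : Γ.NoEmptyCones) {L : Finset Γ.FinPath}
    {D : Set (ℕ → Γ.E)} (hL : Γ.IsConePartition L D) {n : ℕ}
    (hn : ∀ γ ∈ L, γ.edges.length ≤ n) :
    ∃ L', Γ.IsConePartition L' D ∧ (∀ δ ∈ L', δ.edges.length = n) ∧
      Γ.expansionCon.mk' (Γ.coneType L) = Γ.expansionCon.mk' (Γ.coneType L') := by
  obtain ⟨hpart, htype⟩ := hL.biUnion hne (K := fun γ => Γ.extensions (n - γ.edges.length) γ)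
    fun γ _ => (isConePartition_extensions hne _ γ).1
  refine ⟨_, hpart, fun δ hδ => ?_, ?_⟩
  · obtain ⟨γ, hγ, hδ⟩ := Finset.mem_biUnion.1 hδ
    rw [length_of_mem_extensions hδ]
    have := hn γ hγ
    omega
  · rw [htype, coneType, map_sum, map_sum]
    refine Finset.sum_congr rfl fun γ _ => ?_
    rw [(isConePartition_extensions hne _ γ).2]
    exact (expands_expandAll_pow _ _).mk'_eq

theorem IsConePartition.subset_of_length_eq (hne : Γ.NoEmptyCones) {L₁ L₂ : Finset Γ.FinPath}
    {D : Set (ℕ → Γ.E)} (h₁ : Γ.IsConePartition L₁ D) (h₂ : Γ.IsConePartition L₂ D) {n : ℕ}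
    (hl₁ : ∀ γ ∈ L₁, γ.edges.length = n) (hl₂ : ∀ γ ∈ L₂, γ.edges.length = n) : L₁ ⊆ L₂ := by
  intro γ hγ
  obtain ⟨x, hx⟩ := hne γ
  have hx₂ := h₁.cone_subset hγ hx
  rw [← h₂.1, Set.mem_iUnion₂] at hx₂
  obtain ⟨δ, hδ, hxδ⟩ := hx₂
  rwa [eq_of_mem_cone_of_length_eq ((hl₁ γ hγ).trans (hl₂ δ hδ).symm) hx hxδ]

theorem IsConePartition.mk'_coneType_eq (hne : Γ.NoEmptyCones) {L₁ L₂ : Finset Γ.FinPath}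
    {D : Set (ℕ → Γ.E)} (h₁ : Γ.IsConePartition L₁ D) (h₂ : Γ.IsConePartition L₂ D) :
    Γ.expansionCon.mk' (Γ.coneType L₁) = Γ.expansionCon.mk' (Γ.coneType L₂) := by
  have hn := (Finset.sup_le_iff (s := L₁ ∪ L₂) (f := fun γ => γ.edges.length)).1 le_rfl
  obtain ⟨L₁', h₁', hl₁, e₁⟩ := h₁.exists_refinement hne fun γ hγ =>
    hn γ (Finset.mem_union_left _ hγ)
  obtain ⟨L₂', h₂', hl₂, e₂⟩ := h₂.exists_refinement hne fun γ hγ =>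
    hn γ (Finset.mem_union_right _ hγ)
  rw [e₁, e₂, (h₁'.subset_of_length_eq hne h₂' hl₁ hl₂).antisymm
    (h₂'.subset_of_length_eq hne h₁' hl₂ hl₁)]

theorem isClosed_shift : IsClosed Γ.shift := by
  have : Γ.shift = ⋂ i, (fun x : ℕ → Γ.E => (x i, x (i + 1))) ⁻¹' {p | Γ.t p.1 = Γ.o p.2} := by
    ext x
    simp [shift]
  rw [this]
  exact isClosed_iInter fun i =>
    (isClosed_discrete _).preimage ((continuous_apply i).prodMk (continuous_apply (i + 1)))

theorem ClopenIn.exists_depth {D : Set (ℕ → Γ.E)} (hD : D ⊆ Γ.shift) (hclopen : Γ.ClopenIn D) :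
    ∃ n, ∀ x ∈ D, ∀ y ∈ Γ.shift, y ∈ PiNat.cylinder x n → y ∈ D := by
  have : CompactSpace Γ.shift := isCompact_iff_compactSpace.1 isClosed_shift.isCompact
  obtain ⟨U, hU, hUD⟩ := isOpen_induced_iff.1 hclopen.isOpen
  have hdepth : ∀ z : Γ.shift, (z : ℕ → Γ.E) ∈ D → ∃ m, PiNat.cylinder (z : ℕ → Γ.E) m ⊆ U := by
    intro z hz
    obtain ⟨_, ⟨y, m, rfl⟩, hzy, hU'⟩ :=
      (PiNat.isTopologicalBasis_cylinders _).exists_subset_of_mem_open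
        (show z ∈ Subtype.val ⁻¹' U from hUD ▸ hz) hU
    exact ⟨m, PiNat.mem_cylinder_iff_eq.1 hzy ▸ hU'⟩
  choose! m hm using hdepth
  obtain ⟨t, htD, hcover⟩ := hclopen.isClosed.isCompact.elim_nhds_subcover
    (fun z => Subtype.val ⁻¹' PiNat.cylinder (z : ℕ → Γ.E) (m z)) fun z _ =>
      ((PiNat.isOpen_cylinder _ _ _).preimage continuous_subtype_val).mem_nhds
        (PiNat.self_mem_cylinder _ _)
  refine ⟨t.sup m, fun x hx y hy hxy => ?_⟩
  obtain ⟨z, hz, hxz⟩ := Set.mem_iUnion₂.1 (hcover (show (⟨x, hD hx⟩ : Γ.shift) ∈ _ from hx))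
  have hyU : y ∈ U := hm z (htD z hz) fun i hi =>
    (hxy i (hi.trans_le (Finset.le_sup hz))).trans (hxz i hi)
  have hyD : (⟨y, hy⟩ : Γ.shift) ∈ Subtype.val ⁻¹' U := hyU
  rw [hUD] at hyD
  exact hyD

theorem finite_setOf_length_eq (n : ℕ) : {γ : Γ.FinPath | γ.edges.length = n}.Finite :=
  (((Set.finite_univ (α := Γ.V)).prod (List.finite_length_eq Γ.E n)).preimage
    (f := fun γ : Γ.FinPath => (γ.start, γ.edges)) fun _ _ _ _ h =>
      FinPath.ext (congrArg Prod.fst h) (congrArg Prod.snd h)).subset fun _ hγ => ⟨trivial, hγ⟩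

theorem ClopenIn.exists_isConePartition {D : Set (ℕ → Γ.E)} (hD : D ⊆ Γ.shift)
    (hclopen : Γ.ClopenIn D) : ∃ L, Γ.IsConePartition L D := by
  obtain ⟨n, hn⟩ := hclopen.exists_depth hD
  have hS : {γ : Γ.FinPath | γ.edges.length = n ∧ Γ.cone γ ⊆ D}.Finite :=
    (finite_setOf_length_eq n).subset fun γ hγ => hγ.1
  refine ⟨hS.toFinset, Set.Subset.antisymm
    (Set.iUnion₂_subset fun γ hγ => (hS.mem_toFinset.1 hγ).2) fun x hx => ?_, ?_⟩
  · obtain ⟨γ, hγn, hxγ⟩ := exists_mem_cone_length_eq (hD hx) n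
    refine Set.mem_biUnion (hS.mem_toFinset.2 ⟨hγn, fun y hy => hn x hx y hy.1 fun i hi => ?_⟩) hxγ
    rw [hy.2.2 i (hγn ▸ hi), hxγ.2.2 i (hγn ▸ hi)]
  · intro γ hγ δ hδ hγδ
    rw [Set.Finite.coe_toFinset] at hγ hδ
    exact Set.disjoint_left.2 fun x hxγ hxδ =>
      hγδ (eq_of_mem_cone_of_length_eq (hγ.1.trans hδ.1.symm) hxγ hxδ)

theorem clopenIn_cone (γ : Γ.FinPath) : Γ.ClopenIn (Γ.cone γ) := by
  have hcoord : ∀ i (S : Set Γ.E), IsClopen ((fun z : Γ.shift => (z : ℕ → Γ.E) i) ⁻¹' S) :=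
    fun i S => (isClopen_discrete S).preimage ((continuous_apply i).comp continuous_subtype_val)
  have hcone : {z : Γ.shift | (z : ℕ → Γ.E) ∈ Γ.cone γ} =
      (fun z : Γ.shift => (z : ℕ → Γ.E) 0) ⁻¹' {e | Γ.o e = γ.start} ∩
        ⋂ i : Fin γ.edges.length, (fun z : Γ.shift => (z : ℕ → Γ.E) i) ⁻¹' {γ.edges.get i} := by
    ext z
    simp only [cone, Set.mem_ofPred_eq, Set.mem_inter_iff, Set.mem_iInter, Set.mem_preimage,
      Set.mem_singleton_iff, Fin.forall_iff]
    exact and_iff_right z.2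
  rw [ClopenIn, hcone]
  exact (hcoord 0 _).inter (isClopen_iInter_of_finite fun i => hcoord i _)

theorem clopenIn_iUnion_cone {ι : Type*} [Finite ι] (α : ι → Γ.FinPath) :
    Γ.ClopenIn (⋃ i, Γ.cone (α i)) := by
  rw [ClopenIn, show {z : Γ.shift | (z : ℕ → Γ.E) ∈ ⋃ i, Γ.cone (α i)} =
    ⋃ i, {z : Γ.shift | (z : ℕ → Γ.E) ∈ Γ.cone (α i)} from Set.preimage_iUnion]
  exact isClopen_iUnion_of_finite fun i => clopenIn_cone (α i)

theorem ClopenIn.diff {D D' : Set (ℕ → Γ.E)} (h : Γ.ClopenIn D) (h' : Γ.ClopenIn D') :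
    Γ.ClopenIn (D \ D') :=
  IsClopen.diff h h'

variable (Γ) in
def IsIndexedConePartition {ι : Type*} (α : ι → Γ.FinPath) (D : Set (ℕ → Γ.E)) : Prop :=
  D = ⋃ i, Γ.cone (α i) ∧ Pairwise fun i j => Disjoint (Γ.cone (α i)) (Γ.cone (α j))

theorem isIndexedConePartition_iUnion {ι : Type*} {α : ι → Γ.FinPath}
    (h : Pairwise fun i j => Disjoint (Γ.cone (α i)) (Γ.cone (α j))) :
    Γ.IsIndexedConePartition α (⋃ i, Γ.cone (α i)) :=
  ⟨rfl, h⟩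

theorem IsIndexedConePartition.exists_isConePartition {ι : Type*} [Fintype ι]
    (hne : Γ.NoEmptyCones) {α : ι → Γ.FinPath} {D : Set (ℕ → Γ.E)}
    (h : Γ.IsIndexedConePartition α D) :
    ∃ L, Γ.IsConePartition L D ∧ Γ.coneType L = ∑ i, {Γ.pathEnd (α i)} := by
  have hinj : Function.Injective α := fun i j hij => by
    by_contra hne'
    obtain ⟨x, hx⟩ := hne (α i)
    exact Set.disjoint_left.1 (h.2 hne') hx (hij ▸ hx)
  refine ⟨Finset.univ.map ⟨α, hinj⟩, ⟨by simp [h.1], ?_⟩, Finset.sum_map _ _ _⟩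
  simp only [Finset.coe_map, Finset.coe_univ, Set.image_univ]
  rintro _ ⟨i, rfl⟩ _ ⟨j, rfl⟩ hij
  exact h.2 fun h' => hij (congrArg α h')

theorem IsConePartition.isIndexedConePartition {L : Finset Γ.FinPath} {D : Set (ℕ → Γ.E)}
    (h : Γ.IsConePartition L D) : Γ.IsIndexedConePartition (fun γ : L => (γ : Γ.FinPath)) D :=
  ⟨by rw [← h.1, Set.iUnion_subtype],
    fun γ δ hγδ => h.2 γ.2 δ.2 (Subtype.coe_injective.ne hγδ)⟩

theorem IsIndexedConePartition.comp_equiv {ι κ : Type*} {α : ι → Γ.FinPath}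
    {D : Set (ℕ → Γ.E)} (h : Γ.IsIndexedConePartition α D) (e : κ ≃ ι) :
    Γ.IsIndexedConePartition (α ∘ e) D :=
  ⟨h.1.trans (e.surjective.iUnion_comp fun i => Γ.cone (α i)).symm,
    h.2.comp_of_injective e.injective⟩

theorem IsIndexedConePartition.sumElim {ι κ : Type*} {α : ι → Γ.FinPath} {β : κ → Γ.FinPath}
    {D₁ D₂ : Set (ℕ → Γ.E)} (h₁ : Γ.IsIndexedConePartition α D₁)
    (h₂ : Γ.IsIndexedConePartition β D₂) (hD : Disjoint D₁ D₂) :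
    Γ.IsIndexedConePartition (Sum.elim α β) (D₁ ∪ D₂) := by
  refine ⟨by rw [Set.iUnion_sum, h₁.1, h₂.1]; rfl, ?_⟩
  have hαβ : ∀ i j, Disjoint (Γ.cone (α i)) (Γ.cone (β j)) := fun i j =>
    hD.mono (h₁.1 ▸ Set.subset_iUnion (fun i => Γ.cone (α i)) i)
      (h₂.1 ▸ Set.subset_iUnion (fun j => Γ.cone (β j)) j)
  rintro (i | i) (j | j) hij
  · exact h₁.2 fun h => hij (congrArg _ h)
  · exact hαβ i j
  · exact (hαβ j i).symm
  · exact h₂.2 fun h => hij (congrArg _ h)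

theorem exists_equiv_pathEnd_eq_of_coneType_eq {L₁ L₂ : Finset Γ.FinPath}
    (h : Γ.coneType L₁ = Γ.coneType L₂) :
    ∃ e : L₁ ≃ L₂, ∀ γ, Γ.pathEnd (e γ) = Γ.pathEnd γ := by
  have hmap : ∀ L : Finset Γ.FinPath,
      Γ.coneType L = (Finset.univ : Finset L).val.map fun γ : L => Γ.pathEnd γ := fun L => by
    rw [coneType, ← Finset.sum_coe_sort, ← Finset.sum_map_val]
    simpa using Multiset.sum_map_singleton
      ((Finset.univ : Finset L).val.map fun γ : L => Γ.pathEnd γ)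
  exact Fintype.exists_equiv_of_map_univ_eq ((hmap L₁).symm.trans (h.trans (hmap L₂)))

variable (Γ) in
def spliceOn {ι : Type*} (α β : ι → Γ.FinPath) (x : ℕ → Γ.E) : ℕ → Γ.E :=
  if h : ∃ i, x ∈ Γ.cone (α i) then Γ.splice (α h.choose) (β h.choose) x else x

theorem spliceOn_of_mem {ι : Type*} {α : ι → Γ.FinPath} (β : ι → Γ.FinPath)
    (hα : Pairwise fun i j => Disjoint (Γ.cone (α i)) (Γ.cone (α j))) {i : ι} {x : ℕ → Γ.E}
    (hx : x ∈ Γ.cone (α i)) : Γ.spliceOn α β x = Γ.splice (α i) (β i) x := by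
  have h : ∃ i, x ∈ Γ.cone (α i) := ⟨i, hx⟩
  obtain rfl : h.choose = i := by
    by_contra hne
    exact Set.disjoint_left.1 (hα hne) h.choose_spec hx
  exact dif_pos h

theorem IsIndexedConePartition.spliceOn_mem {ι : Type*} {α β : ι → Γ.FinPath}
    {E : Set (ℕ → Γ.E)} (hα : Γ.IsIndexedConePartition α E) (hβ : Γ.IsIndexedConePartition β E)
    (hend : ∀ i, Γ.pathEnd (α i) = Γ.pathEnd (β i)) {x : ℕ → Γ.E} (hx : x ∈ E) :
    Γ.spliceOn α β x ∈ E ∧ Γ.spliceOn β α (Γ.spliceOn α β x) = x := by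
  rw [hα.1, Set.mem_iUnion] at hx
  obtain ⟨i, hi⟩ := hx
  have hβi := splice_mem_cone (hend i) hi
  rw [spliceOn_of_mem β hα.2 hi, spliceOn_of_mem α hβ.2 hβi, splice_splice hi, hβ.1]
  exact ⟨Set.mem_iUnion.2 ⟨i, hβi⟩, rfl⟩

theorem exists_isThompson {ι : Type*} [Finite ι] {α β : ι → Γ.FinPath} {E : Set (ℕ → Γ.E)}
    (hend : ∀ i, Γ.pathEnd (α i) = Γ.pathEnd (β i)) (hα : Γ.IsIndexedConePartition α E)
    (hβ : Γ.IsIndexedConePartition β E) :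
    ∃ f : Equiv.Perm E, Γ.IsThompson E f ∧ ∀ i, Γ.RealizesCanonSim E f (α i) (β i) := by
  have h₁ := fun x : E => hα.spliceOn_mem hβ hend x.2
  have h₂ := fun x : E => hβ.spliceOn_mem hα (fun i => (hend i).symm) x.2
  let f : Equiv.Perm E :=
    ⟨fun x => ⟨Γ.spliceOn α β x, (h₁ x).1⟩, fun y => ⟨Γ.spliceOn β α y, (h₂ y).1⟩,
      fun x => Subtype.ext (h₁ x).2, fun y => Subtype.ext (h₂ y).2⟩
  have hf : ∀ i, Γ.RealizesCanonSim E f (α i) (β i) := fun i _ _ hx => spliceOn_of_mem β hα.2 hx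
  obtain ⟨n, ⟨σ⟩⟩ := Finite.exists_equiv_fin ι
  have hα' := hα.comp_equiv σ.symm
  have hβ' := hβ.comp_equiv σ.symm
  exact ⟨f, ⟨n, α ∘ σ.symm, β ∘ σ.symm, fun i => hend _, hα'.1, hα'.2, hβ'.1, hβ'.2,
    fun i => hf _⟩, hf⟩

theorem exists_isConePartition_compl (hne : Γ.NoEmptyCones) {E : Set (ℕ → Γ.E)}
    (hEsub : E ⊆ Γ.shift) (hEclopen : Γ.ClopenIn E) {ι : Type*} [Fintype ι]
    {α : ι → Γ.FinPath} (hαE : ∀ i, Γ.cone (α i) ⊆ E)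
    (hαdisj : Pairwise fun i j => Disjoint (Γ.cone (α i)) (Γ.cone (α j)))
    (hαprop : (⋃ i, Γ.cone (α i)) ≠ E) :
    ∃ K, Γ.IsConePartition K (E \ ⋃ i, Γ.cone (α i)) ∧ Γ.coneType K ≠ 0 ∧
      ∀ L, Γ.IsConePartition L E →
        Γ.expansionCon.mk' (Γ.coneType K + ∑ i, {Γ.pathEnd (α i)}) =
          Γ.expansionCon.mk' (Γ.coneType L) := by
  obtain ⟨K, hK⟩ := (hEclopen.diff (clopenIn_iUnion_cone α)).exists_isConePartition
    (Set.sdiff_subset.trans hEsub)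
  obtain ⟨Lα, hLα, hLαtype⟩ := (isIndexedConePartition_iUnion hαdisj).exists_isConePartition hne
  obtain ⟨hpart, htype⟩ := hLα.union hne hK Set.disjoint_sdiff_right
  rw [Set.union_sdiff_cancel (Set.iUnion_subset hαE)] at hpart
  refine ⟨K, hK, hK.coneType_ne_zero (Set.sdiff_nonempty.2 fun h =>
    hαprop (Set.Subset.antisymm (Set.iUnion_subset hαE) h)), fun L hL => ?_⟩
  rw [← hLαtype, add_comm, ← htype]
  exact hpart.mk'_coneType_eq hne hL

theorem HasIrreducibleCore.exists_equiv_isConePartition_compl (hcore : Γ.HasIrreducibleCore)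
    {E : Set (ℕ → Γ.E)} (hEsub : E ⊆ Γ.shift) (hEclopen : Γ.ClopenIn E) {ι : Type*} [Fintype ι]
    {α β : ι → Γ.FinPath} (hαE : ∀ i, Γ.cone (α i) ⊆ E) (hβE : ∀ i, Γ.cone (β i) ⊆ E)
    (hαdisj : Pairwise fun i j => Disjoint (Γ.cone (α i)) (Γ.cone (α j)))
    (hβdisj : Pairwise fun i j => Disjoint (Γ.cone (β i)) (Γ.cone (β j)))
    (hend : ∀ i, Γ.pathEnd (α i) = Γ.pathEnd (β i))
    (hαprop : (⋃ i, Γ.cone (α i)) ≠ E) (hβprop : (⋃ i, Γ.cone (β i)) ≠ E) :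
    ∃ (L₁ L₂ : Finset Γ.FinPath) (e : L₁ ≃ L₂), Γ.IsConePartition L₁ (E \ ⋃ i, Γ.cone (α i)) ∧
      Γ.IsConePartition L₂ (E \ ⋃ i, Γ.cone (β i)) ∧ ∀ γ, Γ.pathEnd (e γ) = Γ.pathEnd γ := by
  have hne := hcore.noEmptyCones
  obtain ⟨L, hL⟩ := hEclopen.exists_isConePartition hEsub
  obtain ⟨K₁, hK₁, hK₁0, hK₁E⟩ :=
    exists_isConePartition_compl hne hEsub hEclopen hαE hαdisj hαprop
  obtain ⟨K₂, hK₂, hK₂0, hK₂E⟩ :=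
    exists_isConePartition_compl hne hEsub hEclopen hβE hβdisj hβprop
  have htype : Γ.expansionCon.mk' (Γ.coneType K₁) = Γ.expansionCon.mk' (Γ.coneType K₂) := by
    refine hcore.mk'_cancel (t := ∑ i, {Γ.pathEnd (α i)}) hK₁0 hK₂0 ?_
    rw [hK₁E L hL, ← hK₂E L hL]
    simp only [hend]
  obtain ⟨Z, hZ₁, hZ₂⟩ := (AddCon.eq _).1 htype
  obtain ⟨L₁, hL₁, rfl⟩ := hK₁.exists_of_expands hne hZ₁
  obtain ⟨L₂, hL₂, hL₂Z⟩ := hK₂.exists_of_expands hne hZ₂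
  obtain ⟨e, he⟩ := exists_equiv_pathEnd_eq_of_coneType_eq hL₂Z.symm
  exact ⟨L₁, L₂, e, hL₁, hL₂, he⟩

end FinDigraph

theorem mapping_cones_with_thompson_general (Γ : FinDigraph) (hcore : Γ.HasIrreducibleCore)
    (E : Set (ℕ → Γ.E)) (hEsub : E ⊆ Γ.shift)
    (hEclopen : Γ.ClopenIn E)
    (k : ℕ) (α β : Fin k → Γ.FinPath)
    (hαE : ∀ i, Γ.cone (α i) ⊆ E) (hβE : ∀ i, Γ.cone (β i) ⊆ E)
    (hαdisj : Pairwise fun i j => Disjoint (Γ.cone (α i)) (Γ.cone (α j)))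
    (hβdisj : Pairwise fun i j => Disjoint (Γ.cone (β i)) (Γ.cone (β j)))
    (hend : ∀ i, Γ.pathEnd (α i) = Γ.pathEnd (β i))
    (hαprop : (⋃ i, Γ.cone (α i)) ≠ E) (hβprop : (⋃ i, Γ.cone (β i)) ≠ E) :
    ∃ f : Equiv.Perm ↥E, Γ.IsThompson E f ∧
      ∀ i, Γ.RealizesCanonSim E f (α i) (β i) := by
  obtain ⟨L₁, L₂, e, hL₁, hL₂, he⟩ := hcore.exists_equiv_isConePartition_compl hEsub hEclopen
    hαE hβE hαdisj hβdisj hend hαprop hβprop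
  have hα := (FinDigraph.isIndexedConePartition_iUnion hαdisj).sumElim
    hL₁.isIndexedConePartition Set.disjoint_sdiff_right
  have hβ := (FinDigraph.isIndexedConePartition_iUnion hβdisj).sumElim
    (hL₂.isIndexedConePartition.comp_equiv e) Set.disjoint_sdiff_right
  rw [Set.union_sdiff_cancel (Set.iUnion_subset hαE)] at hα
  rw [Set.union_sdiff_cancel (Set.iUnion_subset hβE)] at hβ
  obtain ⟨f, hf, hfα⟩ := FinDigraph.exists_isThompson
    (by rintro (i | γ); exacts [hend i, (he γ).symm]) hα hβ
  exact ⟨f, hf, fun i => hfα (.inl i)⟩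

/-- **Mapping cones with `V_{Γ,E}`.**  Given two families of pairwise disjoint cones in
`E` with matching termini, neither of which covers `E`, some element of the Thompson
group `V_{Γ,E}` maps each `C_{α_i}` to `C_{β_i}` by the canonical similarity. -/
theorem mapping_cones_with_thompson (Γ : FinDigraph) (hcore : Γ.HasIrreducibleCore)
    (E : Set (ℕ → Γ.E)) (hEsub : E ⊆ Γ.shift) (hEne : E.Nonempty)
    (hEclopen : Γ.ClopenIn E)
    (k : ℕ) (α β : Fin k → Γ.FinPath)
    (hαE : ∀ i, Γ.cone (α i) ⊆ E) (hβE : ∀ i, Γ.cone (β i) ⊆ E)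
    (hαdisj : Pairwise fun i j => Disjoint (Γ.cone (α i)) (Γ.cone (α j)))
    (hβdisj : Pairwise fun i j => Disjoint (Γ.cone (β i)) (Γ.cone (β j)))
    (hend : ∀ i, Γ.pathEnd (α i) = Γ.pathEnd (β i))
    (hαprop : (⋃ i, Γ.cone (α i)) ≠ E) (hβprop : (⋃ i, Γ.cone (β i)) ≠ E) :
    ∃ f : Equiv.Perm ↥E, Γ.IsThompson E f ∧
      ∀ i, Γ.RealizesCanonSim E f (α i) (β i) :=
  mapping_cones_with_thompson_general Γ hcore E hEsub hEclopen k α β hαE hβE hαdisj hβdisj hend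
    hαprop hβprop

end
end

section
/- Let X be a Hausdorff topological space having a basis of clopen sets, and let G be a full group of homeomorphisms of X. Then G acts highly transitively on each of its orbits: for every G-orbit S ⊆ X, every n ≥ 1, and any two n-tuples of pairwise distinct points of S, some element of G carries the first tuple to the second coordinatewise. In particular, the action of G on each of its orbits is oligomorphic. -/
/-!
If `g ∈ G` maps `y` to `z ≠ y` and `F` is a finite set avoiding `y` and `z`, pick a clopen
neighbourhood `V` of `y` so small that `V` and `g '' V` are disjoint and miss `F`. The involution
acting as `g` on `V`, as `g⁻¹` on `g '' V` and as the identity elsewhere locally agrees with `G`,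
hence lies in `G` by fullness; it maps `y` to `z` and fixes `F` pointwise. Adding the points of a
tuple one at a time then gives high transitivity on orbits. For oligomorphy, fix a finite subset
`T` of the orbit with at least `k` points (or the whole orbit if it is finite): every `k`-tuple of
the orbit is moved into `Tᵏ`.
-/

open Set Function MulAction

theorem Set.exists_finite_subset_forall_encard_le {α : Type*} (S : Set α) (k : ℕ) :
    ∃ T ⊆ S, T.Finite ∧ ∀ A ⊆ S, A.encard ≤ k → A.encard ≤ T.encard := by
  by_cases hS : S.Finite
  · exact ⟨S, subset_rfl, hS, fun A hA _ => encard_le_encard hA⟩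
  · obtain ⟨T, hTS, hT⟩ := exists_subset_encard_eq (s := S) (k := k)
      (by rw [Infinite.encard_eq hS]; exact le_top)
    exact ⟨T, hTS, finite_of_encard_eq_coe hT, fun A _ hA => hT ▸ hA⟩

theorem Set.encard_range_le_natCard {α ι : Type*} [Finite ι] (a : ι → α) :
    (range a).encard ≤ Nat.card ι := by
  rw [← image_univ, ← ENat.card_eq_coe_natCard, ← encard_univ]
  exact encard_image_le a univ

theorem continuous_of_forall_exists_eqOn {X Y : Type*} [TopologicalSpace X] [TopologicalSpace Y]
    {f : X → Y} (hf : ∀ x, ∃ U, IsOpen U ∧ x ∈ U ∧ ∃ k : X → Y, Continuous k ∧ EqOn f k U) :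
    Continuous f :=
  continuous_iff_continuousAt.mpr fun x => by
    obtain ⟨U, hU, hxU, k, hk, hfk⟩ := hf x
    exact hk.continuousAt.congr (Filter.eventuallyEq_of_mem (hU.mem_nhds hxU) hfk).symm

namespace MulAction

variable (G X : Type*) [Group G] [MulAction G X]

/-- Pointwise stabilisers of finite sets act transitively on what is left of each orbit. -/
def IsFixingTransitive : Prop :=
  ∀ y z : X, y ≠ z → z ∈ orbit G y → ∀ F : Set X, F.Finite → y ∉ F → z ∉ F →
    ∃ h : G, h • y = z ∧ ∀ w ∈ F, h • w = w

variable {G X}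

theorem IsFixingTransitive.exists_smul_eqOn (hG : IsFixingTransitive G X) {φ : X → X}
    {A : Set X} (hA : A.Finite) (hφ : InjOn φ A) (horb : ∀ x ∈ A, φ x ∈ orbit G x) :
    ∃ g : G, ∀ x ∈ A, g • x = φ x := by
  induction A, hA using Set.Finite.induction_on with
  | empty => exact ⟨1, fun x hx => hx.elim⟩
  | @insert a A haA hA ih =>
    obtain ⟨g, hg⟩ := ih (hφ.mono (subset_insert a A)) fun x hx => horb x (mem_insert_of_mem a hx)
    by_cases hga : g • a = φ a
    · exact ⟨g, forall_mem_insert.mpr ⟨hga, hg⟩⟩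
    have hφa : φ a ∈ orbit G (g • a) := orbit_smul g a ▸ horb a (mem_insert a A)
    have hgaF : g • a ∉ φ '' A := by
      rintro ⟨x, hx, hxa⟩
      rw [← hg x hx, smul_left_cancel_iff] at hxa
      exact haA (hxa ▸ hx)
    have hφaF : φ a ∉ φ '' A := by
      rintro ⟨x, hx, hxa⟩
      exact haA (hφ (mem_insert_of_mem a hx) (mem_insert a A) hxa ▸ hx)
    obtain ⟨h, hha, hhF⟩ := hG _ _ hga hφa _ (hA.image φ) hgaF hφaF
    refine ⟨h * g, forall_mem_insert.mpr ⟨by rw [mul_smul, hha], fun x hx => ?_⟩⟩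
    rw [mul_smul, hg x hx, hhF _ (mem_image_of_mem φ hx)]

theorem IsFixingTransitive.exists_smul_eq_of_injective (hG : IsFixingTransitive G X)
    {ι : Type*} [Finite ι] {a b : ι → X} (ha : Injective a) (hb : Injective b)
    (horb : ∀ i, b i ∈ orbit G (a i)) : ∃ g : G, ∀ i, g • a i = b i := by
  obtain ⟨g, hg⟩ := hG.exists_smul_eqOn (φ := extend a b id) (finite_range a)
    (by rintro _ ⟨i, rfl⟩ _ ⟨j, rfl⟩ hij; simp only [ha.extend_apply] at hij; rw [hb hij])
    (by rintro _ ⟨i, rfl⟩; rw [ha.extend_apply]; exact horb i)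
  exact ⟨g, fun i => (hg _ (mem_range_self i)).trans (ha.extend_apply b id i)⟩

theorem IsFixingTransitive.exists_finite_representatives_pi (hG : IsFixingTransitive G X)
    (x₀ : X) (ι : Type*) [Finite ι] :
    ∃ R : Set (ι → X), R.Finite ∧ (∀ r ∈ R, ∀ i, r i ∈ orbit G x₀) ∧
      ∀ a : ι → X, (∀ i, a i ∈ orbit G x₀) → ∃ r ∈ R, ∃ g : G, ∀ i, g • r i = a i := by
  obtain ⟨T, hTS, hT, hTcard⟩ := exists_finite_subset_forall_encard_le (orbit G x₀) (Nat.card ι)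
  refine ⟨univ.pi fun _ => T, Finite.pi fun _ => hT, fun r hr i => hTS (hr i trivial),
    fun a ha => ?_⟩
  have : Nonempty X := ⟨x₀⟩
  obtain ⟨ψ, hψT, hψ⟩ := (finite_range a).exists_injOn_of_encard_le
    (hTcard _ (range_subset_iff.mpr ha) (encard_range_le_natCard a))
  obtain ⟨g, hg⟩ := hG.exists_smul_eqOn (finite_range a) hψ <| by
    rintro _ ⟨i, rfl⟩
    rw [orbit_eq_iff.mpr (ha i)]
    exact hTS (hψT (mem_range_self i))
  refine ⟨ψ ∘ a, fun i _ => hψT (mem_range_self i), g⁻¹, fun i => ?_⟩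
  rw [inv_smul_eq_iff, comp_apply, hg _ (mem_range_self i)]

end MulAction

namespace Equiv.Perm

variable {X : Type*}

theorem mem_orbit_subgroup_iff {G : Subgroup (Perm X)} {x y : X} :
    y ∈ orbit G x ↔ ∃ g ∈ G, g x = y :=
  ⟨fun ⟨g, hg⟩ => ⟨g, g.2, hg⟩, fun ⟨g, hg, hgx⟩ => ⟨⟨g, hg⟩, hgx⟩⟩

open Classical in
noncomputable def swapWithImage (g : Perm X) (V : Set X) (hV : _root_.Disjoint V (g '' V)) :
    Perm X :=
  Involutive.toPerm (fun w => if w ∈ V then g w else if w ∈ g '' V then g.symm w else w) <| by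
    intro w
    by_cases hw : w ∈ V
    · have hgw : g w ∈ g '' V := mem_image_of_mem g hw
      simp only [if_pos hw, if_neg (disjoint_right.mp hV hgw), if_pos hgw, symm_apply_apply]
    by_cases hw' : w ∈ g '' V
    · have hgw : g.symm w ∈ V := by obtain ⟨v, hv, rfl⟩ := hw'; simpa using hv
      simp only [if_neg hw, if_pos hw', if_pos hgw, apply_symm_apply]
    · simp only [if_neg hw, if_neg hw']

variable {g : Perm X} {V : Set X} {hV : _root_.Disjoint V (g '' V)}

theorem swapWithImage_apply_of_mem {w : X} (hw : w ∈ V) : swapWithImage g V hV w = g w :=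
  if_pos hw

theorem swapWithImage_apply_of_mem_image {w : X} (hw : w ∈ g '' V) :
    swapWithImage g V hV w = g⁻¹ w :=
  (if_neg (disjoint_right.mp hV hw)).trans (if_pos hw)

theorem swapWithImage_apply_of_notMem {w : X} (hw : w ∉ V) (hw' : w ∉ g '' V) :
    swapWithImage g V hV w = w :=
  (if_neg hw).trans (if_neg hw')

@[simp]
theorem swapWithImage_symm : (swapWithImage g V hV).symm = swapWithImage g V hV := rfl

variable [TopologicalSpace X]

theorem exists_isOpen_eqOn_swapWithImage (hVc : IsClopen V) (hg : Continuous g.symm) (x : X) :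
    ∃ U, IsOpen U ∧ x ∈ U ∧ ∃ k ∈ Subgroup.zpowers g, EqOn (swapWithImage g V hV) k U := by
  have hgV : IsClopen (g '' V) := g.image_eq_preimage_symm V ▸ hVc.preimage hg
  by_cases hx : x ∈ V
  · exact ⟨V, hVc.isOpen, hx, g, Subgroup.mem_zpowers g, fun w => swapWithImage_apply_of_mem⟩
  by_cases hx' : x ∈ g '' V
  · exact ⟨g '' V, hgV.isOpen, hx', g⁻¹, inv_mem (Subgroup.mem_zpowers g),
      fun w => swapWithImage_apply_of_mem_image⟩
  refine ⟨(V ∪ g '' V)ᶜ, (hVc.isClosed.union hgV.isClosed).isOpen_compl,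
    by simpa only [mem_compl_iff, mem_union, not_or] using ⟨hx, hx'⟩, 1, one_mem _,
    fun w hw => ?_⟩
  simp only [mem_compl_iff, mem_union, not_or] at hw
  exact swapWithImage_apply_of_notMem hw.1 hw.2

end Equiv.Perm

namespace Subgroup

open Equiv Perm

variable {X : Type*} [TopologicalSpace X]

def IsFull (G : Subgroup (Perm X)) : Prop :=
  ∀ h : Perm X, Continuous h → Continuous h.symm →
    (∀ x, ∃ U : Set X, IsOpen U ∧ x ∈ U ∧ ∃ g ∈ G, ∀ u ∈ U, h u = g u) → h ∈ G

variable {G : Subgroup (Perm X)}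

theorem IsFull.swapWithImage_mem (hfull : G.IsFull)
    (hhomeo : ∀ g ∈ G, Continuous g ∧ Continuous g.symm) {g : Perm X} (hg : g ∈ G)
    {V : Set X} (hVc : IsClopen V) (hV : Disjoint V (g '' V)) : swapWithImage g V hV ∈ G := by
  have hzpowers : zpowers g ≤ G := zpowers_le.mpr hg
  have hloc := exists_isOpen_eqOn_swapWithImage (hV := hV) hVc (hhomeo g hg).2
  have hcont : Continuous (swapWithImage g V hV) := continuous_of_forall_exists_eqOn fun x => by
    obtain ⟨U, hU, hxU, k, hk, hkU⟩ := hloc x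
    exact ⟨U, hU, hxU, k, (hhomeo k (hzpowers hk)).1, hkU⟩
  refine hfull _ hcont (by rwa [swapWithImage_symm]) fun x => ?_
  obtain ⟨U, hU, hxU, k, hk, hkU⟩ := hloc x
  exact ⟨U, hU, hxU, k, hzpowers hk, hkU⟩

theorem IsFull.isFixingTransitive [T2Space X]
    (hbasis : ∀ (x : X) (U : Set X), IsOpen U → x ∈ U → ∃ V : Set X, IsClopen V ∧ x ∈ V ∧ V ⊆ U)
    (hfull : G.IsFull) (hhomeo : ∀ g ∈ G, Continuous g ∧ Continuous g.symm) :
    IsFixingTransitive G X := by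
  rintro y _ hyz ⟨⟨g, hg⟩, rfl⟩ F hF hyF hzF
  have hgc : Continuous g := (hhomeo g hg).1
  obtain ⟨A, B, hA, hB, hyA, hzB, hAB⟩ := t2_separation hyz
  obtain ⟨V, hVc, hyV, hVU⟩ := hbasis y (Fᶜ ∩ g ⁻¹' Fᶜ ∩ (A ∩ g ⁻¹' B))
    ((hF.isClosed.isOpen_compl.inter (hF.isClosed.isOpen_compl.preimage hgc)).inter
      (hA.inter (hB.preimage hgc)))
    ⟨⟨hyF, hzF⟩, hyA, hzB⟩
  have hV : Disjoint V (g '' V) :=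
    hAB.mono (fun v hv => (hVU hv).2.1) (image_subset_iff.mpr fun v hv => (hVU hv).2.2)
  refine ⟨⟨swapWithImage g V hV, hfull.swapWithImage_mem hhomeo hg hVc hV⟩,
    swapWithImage_apply_of_mem (hV := hV) hyV,
    fun w hw => swapWithImage_apply_of_notMem (hV := hV) ?_ ?_⟩
  · exact fun hwV => (hVU hwV).1.1 hw
  · rintro ⟨v, hv, rfl⟩
    exact (hVU hv).1.2 hw

end Subgroup

/-- Let `X` be a Hausdorff space with a basis of clopen sets and let `G` be a full
group of homeomorphisms of `X`.  Then `G` acts highly transitively on each of its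
orbits; in particular the action on each orbit is oligomorphic. -/
theorem full_group_highly_transitive_on_orbits (X : Type) [TopologicalSpace X]
    [T2Space X]
    (hbasis : ∀ (x : X) (U : Set X), IsOpen U → x ∈ U →
      ∃ V : Set X, IsClopen V ∧ x ∈ V ∧ V ⊆ U)
    (G : Subgroup (Equiv.Perm X))
    (hhomeo : ∀ g ∈ G, Continuous ⇑g ∧ Continuous ⇑g.symm)
    (hfull : ∀ h : Equiv.Perm X, Continuous ⇑h → Continuous ⇑h.symm →
      (∀ x : X, ∃ U : Set X, IsOpen U ∧ x ∈ U ∧ ∃ g ∈ G, ∀ u ∈ U, h u = g u) →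
      h ∈ G)
    (x₀ : X) (S : Set X) (hS : S = {y | ∃ g ∈ G, g x₀ = y}) :
    (∀ (k : ℕ) (a b : Fin k → X), (∀ i, a i ∈ S) → (∀ i, b i ∈ S) →
      Function.Injective a → Function.Injective b →
      ∃ g ∈ G, ∀ i, g (a i) = b i) ∧
    ∀ k : ℕ, ∃ R : Set (Fin k → X), R.Finite ∧ (∀ r ∈ R, ∀ i, r i ∈ S) ∧
      ∀ a : Fin k → X, (∀ i, a i ∈ S) → ∃ r ∈ R, ∃ g ∈ G, ∀ i, g (r i) = a i := by
  have hG : IsFixingTransitive G X := Subgroup.IsFull.isFixingTransitive hbasis hfull hhomeo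
  obtain rfl : S = orbit G x₀ := hS.trans (ext fun _ => Equiv.Perm.mem_orbit_subgroup_iff.symm)
  refine ⟨fun k a b ha hb hainj hbinj => ?_, fun k => ?_⟩
  · obtain ⟨g, hg⟩ := hG.exists_smul_eq_of_injective hainj hbinj
      fun i => orbit_eq_iff.mpr (ha i) ▸ hb i
    exact ⟨g, g.2, hg⟩
  · obtain ⟨R, hR, hRS, hRa⟩ := hG.exists_finite_representatives_pi x₀ (Fin k)
    refine ⟨R, hR, hRS, fun a ha => ?_⟩
    obtain ⟨r, hr, g, hg⟩ := hRa a ha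
    exact ⟨r, hr, g, g.2, hg⟩
end

section
/- Let Σ_Γ be a subshift of finite type without isolated points or empty cones, let E ⊆ Σ_Γ be a nonempty clopen set, and let G ≤ R_{Γ,E} be an RSG whose nucleus 𝒩_G is finite. Let ω ∈ E be a rational point. Then the group of germs [G]_ω is virtually infinite cyclic. -/
open scoped Classical

noncomputable section

/-- `g` is the identity on some open neighborhood of `x` in `E`. -/
def LocTrivAt {X : Type} [TopologicalSpace X] (g : Equiv.Perm X) (x : X) : Prop :=
  ∃ U : Set X, IsOpen U ∧ x ∈ U ∧ ∀ u ∈ U, g u = u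

/-!
Write `ω = σ·τ^∞` with period `L = |τ|` and fix a level `a` beyond `|σ|` such that every point
of `Σ_Γ` sharing the prefix `ω|a` lies in `E`. The RSG property provides `f ∈ G` with
`f(ω|a · w) = ω|(a + L) · w`; it fixes `ω`, and since `ω` is not isolated no nonzero power of `f`
is the identity near `ω`.

An element `g` of the stabilizer acts as `g(ω|n · w) = ω|bₙ · ρₙ(w)` with `bₙ → ∞`. By
rationality some triple `(ρₙ, bₙ mod L, n mod L)` recurs for infinitely many `n`, and `ρₙ` then
lies in the finite nucleus. Two elements sharing such a triple have the same germ up to powers of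
`f` on both sides; comparing an element with itself at two levels gives `u ≡ f^κ u f^ε` with
`ε ≠ 0`. Hence one representative per triple, times `f^e` with `e < |ε|`, covers `[G]_ω` by
finitely many cosets of `⟨f⟩`.
-/

open Filter Topology Function

namespace PiNat

variable {α : Type*}

def tail (m : ℕ) (x : ℕ → α) : ℕ → α := fun i => x (i + m)

/-- The concatenation `x|m · w`. -/
def prefixCat (x : ℕ → α) (m : ℕ) (w : ℕ → α) : ℕ → α := fun i => if i < m then x i else w (i - m)

@[simp]
lemma tail_apply (m : ℕ) (x : ℕ → α) (i : ℕ) : tail m x i = x (i + m) := rfl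

lemma prefixCat_mem_cylinder (x : ℕ → α) (m : ℕ) (w : ℕ → α) : prefixCat x m w ∈ cylinder x m :=
  fun _ hi => if_pos hi

lemma tail_prefixCat_of_le {n m : ℕ} (h : n ≤ m) (x w : ℕ → α) :
    tail n (prefixCat x m w) = prefixCat (tail n x) (m - n) w := by
  funext i
  simp only [tail, prefixCat]
  split_ifs <;> first | rfl | omega | congr 1; omega

@[simp]
lemma tail_prefixCat (x : ℕ → α) (m : ℕ) (w : ℕ → α) : tail m (prefixCat x m w) = w := by
  funext i
  simp [tail, prefixCat]

lemma prefixCat_tail {x y : ℕ → α} {m : ℕ} (hy : y ∈ cylinder x m) :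
    prefixCat x m (tail m y) = y := by
  funext i
  by_cases hi : i < m
  · simp [prefixCat, hi, hy i hi]
  · simp [prefixCat, hi, Nat.sub_add_cancel (not_lt.1 hi)]

lemma apply_add_of_periodic {x : ℕ → α} {a L i : ℕ} (h : Periodic (tail a x) L) (hi : a ≤ i) :
    x (i + L) = x i := by
  have := h (i - a)
  simp only [tail_apply] at this
  rwa [Nat.add_right_comm, Nat.sub_add_cancel hi] at this

lemma periodic_tail_of_le {x : ℕ → α} {s a L : ℕ} (h : Periodic (tail s x) L) (hsa : s ≤ a) :
    Periodic (tail a x) L := fun i => by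
  simpa only [tail_apply, Nat.add_right_comm i L] using
    apply_add_of_periodic h (by omega : s ≤ i + a)

lemma tail_add_mul {x : ℕ → α} {a L n : ℕ} (h : Periodic (tail a x) L) (hn : a ≤ n) (k : ℕ) :
    tail (n + k * L) x = tail n x := by
  funext i
  simpa only [tail_apply, Nat.cast_id, ← add_assoc] using
    apply_add_of_periodic (h.nat_mul k) (by omega : a ≤ i + n)

lemma prefixCat_add_tail {x y : ℕ → α} {a L m : ℕ} (h : Periodic (tail a x) L) (ham : a ≤ m)
    (hy : y ∈ cylinder x m) :
    prefixCat x (a + L) (tail a y) = prefixCat x (m + L) (tail m y) := by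
  funext i
  simp only [prefixCat, tail_apply]
  split_ifs with h₁ h₂ h₂
  · rfl
  · omega
  · rw [show i - (a + L) + a = i - L by omega, hy _ (by omega),
      ← apply_add_of_periodic h (by omega : a ≤ i - L), Nat.sub_add_cancel (by omega)]
  · congr 1
    omega

lemma eq_of_prefixCat_tail_eq {x y : ℕ → α} {m p : ℕ} (h : Periodic (tail m x) p) (hp : 0 < p)
    (hy : prefixCat x (m + p) (tail m y) = y) : y = x := by
  funext i
  induction i using Nat.strong_induction_on with
  | _ i ih =>
    rw [← hy]
    by_cases hi : i < m + p
    · simp [prefixCat, hi]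
    · simp only [prefixCat, hi, if_false, tail_apply]
      rw [show i - (m + p) + m = i - p by omega, ih _ (by omega),
        ← apply_add_of_periodic h (by omega : m ≤ i - p), Nat.sub_add_cancel (by omega)]

section Topology

variable [TopologicalSpace α] [DiscreteTopology α]

lemma hasBasis_nhds_cylinder (x : ℕ → α) : (𝓝 x).HasBasis (fun _ => True) (cylinder x) := by
  refine ⟨fun U => ⟨fun hU => ?_, fun ⟨n, _, hn⟩ =>
    mem_of_superset ((isOpen_cylinder (fun _ => α) x n).mem_nhds (self_mem_cylinder x n)) hn⟩⟩
  obtain ⟨_, ⟨y, n, rfl⟩, hxy, hU⟩ := (isTopologicalBasis_cylinders (fun _ => α)).mem_nhds_iff.1 hU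
  exact ⟨n, trivial, (mem_cylinder_iff_eq.1 hxy).symm ▸ hU⟩

lemma hasBasis_nhds_subtype_cylinder {S : Set (ℕ → α)} (x : S) :
    (𝓝 x).HasBasis (fun _ => True) (fun n => Subtype.val ⁻¹' cylinder (x : ℕ → α) n) := by
  rw [nhds_subtype]
  exact (hasBasis_nhds_cylinder _).comap _

lemma exists_mem_cylinder_ne {S : Set (ℕ → α)} {x : ℕ → α} (hx : x ∈ S)
    (hiso : ¬IsOpen ({⟨x, hx⟩} : Set S)) (n : ℕ) : ∃ y ∈ S, y ∈ cylinder x n ∧ y ≠ x := by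
  by_contra! h
  refine hiso ?_
  convert (isOpen_cylinder (fun _ => α) x n).preimage continuous_subtype_val
  ext ⟨y, hy⟩
  exact ⟨fun h' => by cases h'; exact self_mem_cylinder x n,
    fun h' => Subtype.ext (h y hy h')⟩

end Topology

/-- `f` acts as `x|a · w ↦ x|(a + L) · w` on the cylinder of `x|a`. -/
def InsertsPeriod (E : Set (ℕ → α)) (x : ℕ → α) (a L : ℕ) (f : Equiv.Perm E) : Prop :=
  ∀ y : E, (y : ℕ → α) ∈ cylinder x a → (f y : ℕ → α) = prefixCat x (a + L) (tail a y)

section InsertsPeriod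

variable {E : Set (ℕ → α)} {x : ℕ → α} {a L : ℕ} {f : Equiv.Perm E}

lemma InsertsPeriod.coe_pow_apply (hf : InsertsPeriod E x a L f) (hper : Periodic (tail a x) L)
    {m : ℕ} (ham : a ≤ m) (k : ℕ) {y : E} (hym : (y : ℕ → α) ∈ cylinder x m) :
    ((f ^ k) y : ℕ → α) = prefixCat x (m + k * L) (tail m y) := by
  induction k with
  | zero => simpa using (prefixCat_tail hym).symm
  | succ k ih =>
    have hmem : ((f ^ k) y : ℕ → α) ∈ cylinder x (m + k * L) := ih ▸ prefixCat_mem_cylinder _ _ _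
    rw [pow_succ', Equiv.Perm.mul_apply, hf _ (cylinder_anti _ (by omega) hmem),
      prefixCat_add_tail hper (by omega) hmem, ih, tail_prefixCat, add_mul, one_mul, add_assoc]

lemma InsertsPeriod.apply_self (hf : InsertsPeriod E x a L f) (hper : Periodic (tail a x) L)
    (hx : x ∈ E) : f ⟨x, hx⟩ = ⟨x, hx⟩ := by
  ext1
  simpa [← tail_add_mul hper le_rfl 1, prefixCat_tail (self_mem_cylinder x _)] using
    hf.coe_pow_apply hper le_rfl 1 (y := ⟨x, hx⟩) (self_mem_cylinder x a)

variable [TopologicalSpace α] [DiscreteTopology α]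

lemma InsertsPeriod.not_eventuallyEq_pow (hf : InsertsPeriod E x a L f)
    (hper : Periodic (tail a x) L) (hL : 0 < L) (hx : x ∈ E)
    (hacc : ∀ n, ∃ y ∈ E, y ∈ cylinder x n ∧ y ≠ x) {k : ℕ} (hk : 0 < k) :
    ¬ ⇑(f ^ k) =ᶠ[𝓝 ⟨x, hx⟩] id := by
  intro hfix
  obtain ⟨n, -, hn⟩ := (hasBasis_nhds_subtype_cylinder _).eventually_iff.1 hfix
  obtain ⟨y, hyE, hy, hyx⟩ := hacc (max n a)
  refine hyx (eq_of_prefixCat_tail_eq ((periodic_tail_of_le hper (le_max_right n a)).nat_mul k)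
    (Nat.mul_pos hk hL) ?_)
  rw [Nat.cast_id, ← hf.coe_pow_apply hper (le_max_right n a) k (y := ⟨y, hyE⟩) hy]
  exact congrArg Subtype.val (hn (cylinder_anti _ (le_max_left n a) hy))

end InsertsPeriod

end PiNat

section Germs

variable {X : Type} [TopologicalSpace X]

lemma locTrivAt_iff {g : Equiv.Perm X} {x : X} : LocTrivAt g x ↔ ⇑g =ᶠ[𝓝 x] id := by
  rw [EventuallyEq, eventually_nhds_iff]
  exact exists_congr fun U => by tauto

lemma locTrivAt_inv_mul_of_eventuallyEq {g h : Equiv.Perm X} {x : X} (hgh : ⇑h =ᶠ[𝓝 x] ⇑g) :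
    LocTrivAt (g⁻¹ * h) x :=
  locTrivAt_iff.2 <| (hgh.fun_comp ⇑g⁻¹).trans (Eventually.of_forall fun y => by simp)

lemma not_locTrivAt_zpow {g : Equiv.Perm X} {x : X} (hg : ∀ n : ℕ, 0 < n → ¬ ⇑(g ^ n) =ᶠ[𝓝 x] id)
    {k : ℤ} (hk : k ≠ 0) : ¬LocTrivAt (g ^ k) x := by
  rw [locTrivAt_iff]
  intro htriv
  obtain ⟨n, hn, rfl | rfl⟩ : ∃ n : ℕ, 0 < n ∧ (k = n ∨ k = -n) :=
    ⟨k.natAbs, Int.natAbs_pos.2 hk, Int.natAbs_eq k⟩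
  · rw [zpow_natCast] at htriv
    exact hg n hn htriv
  · rw [zpow_neg, zpow_natCast] at htriv
    exact hg n hn <|
      (htriv.fun_comp ⇑(g ^ n)).symm.trans (Eventually.of_forall fun y => by simp)

/-- Equality of germs at `x`: a congruence on the stabilizer of `x` in `G`, whose quotient is
the group of germs `[G]_x`. -/
def germCon (G : Subgroup (Equiv.Perm X)) (x : X) (hG : ∀ g ∈ G, ContinuousAt g x) :
    Con ↥(G ⊓ MulAction.stabilizer (Equiv.Perm X) x) where
  r g₁ g₂ := ⇑(g₁ : Equiv.Perm X) =ᶠ[𝓝 x] ⇑(g₂ : Equiv.Perm X)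
  iseqv := ⟨fun _ => EventuallyEq.rfl, EventuallyEq.symm, EventuallyEq.trans⟩
  mul' {g₁ g₂ h₁ h₂} hg hh := by
    have htends : Tendsto (h₂ : Equiv.Perm X) (𝓝 x) (𝓝 x) := by
      have hfix : (h₂ : Equiv.Perm X) x = x := h₂.2.2
      simpa only [hfix] using (hG _ h₂.2.1).tendsto
    exact (hh.fun_comp _).trans (hg.comp_tendsto htends)

@[simp]
lemma germCon_apply {G : Subgroup (Equiv.Perm X)} {x : X} {hG : ∀ g ∈ G, ContinuousAt g x}
    {g₁ g₂ : ↥(G ⊓ MulAction.stabilizer (Equiv.Perm X) x)} :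
    germCon G x hG g₁ g₂ ↔ ⇑(g₁ : Equiv.Perm X) =ᶠ[𝓝 x] ⇑(g₂ : Equiv.Perm X) :=
  Iff.rfl

end Germs

lemma Con.rel_zpow_mul_mul_zpow {M : Type*} [Group M] (c : Con M) {φ x y : M} {j₁ j₂ i₁ i₂ : ℕ}
    (h : c (φ ^ j₁ * x * φ ^ i₂) (φ ^ j₂ * y * φ ^ i₁)) :
    c x (φ ^ ((j₂ : ℤ) - j₁) * y * φ ^ ((i₁ : ℤ) - i₂)) := by
  convert c.mul (c.mul (c.refl (φ ^ (-(j₁ : ℤ)))) h) (c.refl (φ ^ (-(i₂ : ℤ)))) using 1 <;> group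

lemma Nat.add_div_mul_eq_of_mod_eq {m n L : ℕ} (h : m % L = n % L) :
    m + n / L * L = n + m / L * L := by
  have hm := Nat.div_add_mod m L
  have hn := Nat.div_add_mod n L
  rw [h] at hm
  linarith

lemma exists_zpow_mul_mul_zpow_eq {K : Type*} [Group K] {ψ v : K} {κ₀ ε₀ : ℤ} (hε₀ : ε₀ ≠ 0)
    (hv : v = ψ ^ κ₀ * v * ψ ^ ε₀) (κ ε : ℤ) :
    ∃ k : ℤ, ∃ e < ε₀.natAbs, ψ ^ κ * v * ψ ^ ε = ψ ^ k * (v * ψ ^ e) := by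
  have hsemi : SemiconjBy v (ψ ^ ε₀) (ψ ^ (-κ₀)) := by
    rw [SemiconjBy, zpow_neg, eq_inv_mul_iff_mul_eq, ← mul_assoc]
    exact hv.symm
  obtain ⟨q, r, hr, rfl⟩ : ∃ q : ℤ, ∃ r : ℕ, r < ε₀.natAbs ∧ ε = ε₀ * q + r := by
    have hnonneg := Int.emod_nonneg ε hε₀
    refine ⟨ε / ε₀, (ε % ε₀).toNat, by have := Int.emod_lt ε hε₀; omega, ?_⟩
    rw [Int.toNat_of_nonneg hnonneg, Int.mul_ediv_add_emod]
  refine ⟨κ - κ₀ * q, r, hr, ?_⟩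
  have hcomm := (hsemi.zpow_right q).eq
  rw [← zpow_mul, ← zpow_mul] at hcomm
  rw [zpow_add, zpow_natCast, ← mul_assoc, mul_assoc _ v, hcomm]
  group

/-- A realized type has a representative `u` with `u ≡ φ^κ₀ u φ^ε₀`, `ε₀ ≠ 0`; this lets every
`φ^κ u φ^ε` be rewritten as `φ^k (u φ^e)` with `0 ≤ e < |ε₀|`. -/
theorem Con.exists_finite_zpow_mul_cover {M τ : Type*} [Group M] (c : Con M) (φ : M)
    {T : Set τ} (hT : T.Finite) (R : M → τ → Prop) (htype : ∀ h, ∃ t ∈ T, R h t)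
    (hrel : ∀ h₁ h₂ t, R h₁ t → R h₂ t → ∃ κ ε : ℤ, ε ≠ 0 ∧ c h₁ (φ ^ κ * h₂ * φ ^ ε)) :
    ∃ F : Set M, F.Finite ∧ ∀ h, ∃ k : ℤ, ∃ u ∈ F, c h (φ ^ k * u) := by
  set T' := {t ∈ T | ∃ h, R h t}
  have : Finite T' := (hT.subset (Set.sep_subset _ _)).to_subtype
  choose u hu using fun t : T' => t.2.2
  choose κ₀ ε₀ hε₀ hself using fun t : T' => hrel (u t) (u t) t (hu t) (hu t)
  refine ⟨⋃ t : T', (fun e : ℕ => u t * φ ^ e) '' Set.Iio (ε₀ t).natAbs,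
    Set.finite_iUnion fun t => (Set.finite_Iio _).image _, fun h => ?_⟩
  obtain ⟨t, ht, hRt⟩ := htype h
  set t' : T' := ⟨t, ht, h, hRt⟩
  obtain ⟨κ, ε, -, hκε⟩ := hrel h (u t') t hRt (hu t')
  have hc : ∀ a b, c a b ↔ c.mk' a = c.mk' b := fun a b => c.eq.symm
  have hv := (hc _ _).1 (hself t')
  simp only [map_mul, map_zpow] at hv
  obtain ⟨k, e, he, hk⟩ := exists_zpow_mul_mul_zpow_eq (hε₀ t') hv κ ε
  refine ⟨k, u t' * φ ^ e, Set.mem_iUnion.2 ⟨t', e, he, rfl⟩, (hc _ _).2 ?_⟩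
  have := (hc _ _).1 hκε
  simp only [map_mul, map_zpow, map_pow] at this ⊢
  rw [this, hk]

namespace FinDigraph

open PiNat

variable {Γ : FinDigraph}

lemma tail_mem_shift {x : ℕ → Γ.E} (hx : x ∈ Γ.shift) (n : ℕ) : tail n x ∈ Γ.shift := fun i => by
  simpa [Nat.add_right_comm] using hx (i + n)

lemma pathOk_ofFn {x : ℕ → Γ.E} (hx : x ∈ Γ.shift) (n : ℕ) :
    Γ.pathOk (Γ.o (x 0)) (List.ofFn fun i : Fin n => x i) := by
  induction n generalizing x with
  | zero => trivial
  | succ n ih =>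
    rw [List.ofFn_succ]
    exact ⟨rfl, by simpa [hx 0] using ih (tail_mem_shift hx 1)⟩

def prefixPath (x : ℕ → Γ.E) (hx : x ∈ Γ.shift) (n : ℕ) : Γ.FinPath :=
  ⟨Γ.o (x 0), List.ofFn fun i : Fin n => x i, pathOk_ofFn hx n⟩

section prefixPath

variable {x : ℕ → Γ.E} (hx : x ∈ Γ.shift)

@[simp]
lemma prefixPath_length (n : ℕ) : (prefixPath x hx n).edges.length = n := by
  simp [prefixPath]

lemma prefixPath_injective : Function.Injective (prefixPath x hx) := fun m n h => by
  simpa using congrArg (fun α : Γ.FinPath => α.edges.length) h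

lemma mem_cone_prefixPath {y : ℕ → Γ.E} {n : ℕ} (hn : 0 < n) :
    y ∈ Γ.cone (prefixPath x hx n) ↔ y ∈ Γ.shift ∧ y ∈ cylinder x n := by
  simp only [cone, prefixPath, List.length_ofFn, List.get_eq_getElem, List.getElem_ofFn,
    Set.mem_ofPred_eq, mem_cylinder_iff]
  exact ⟨fun ⟨hy, _, h⟩ => ⟨hy, h⟩, fun ⟨hy, h⟩ => ⟨hy, by rw [h 0 hn], h⟩⟩

lemma splice_prefixPath (m n : ℕ) (y : ℕ → Γ.E) :
    Γ.splice (prefixPath x hx m) (prefixPath x hx n) y = prefixCat x n (tail m y) := by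
  funext i
  simp [splice, prefixCat, prefixPath]

end prefixPath

lemma pathEndAux_eq {x : ℕ → Γ.E} (hx : x ∈ Γ.shift) (l : List Γ.E)
    (hl : ∀ (i : ℕ) (h : i < l.length), x i = l.get ⟨i, h⟩) :
    Γ.pathEndAux (Γ.o (x 0)) l = Γ.o (x l.length) := by
  induction l generalizing x with
  | nil => rfl
  | cons e l ih =>
    have he : x 0 = e := hl 0 (by simp)
    have := ih (tail_mem_shift hx 1) fun i h => by simpa using hl (i + 1) (by simpa using h)
    simpa [pathEndAux, ← he, hx 0] using this

lemma pathEnd_eq_of_mem_cone {α : Γ.FinPath} {x : ℕ → Γ.E} (hx : x ∈ Γ.cone α) :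
    Γ.pathEnd α = Γ.o (x α.edges.length) := by
  rw [pathEnd, ← hx.2.1, pathEndAux_eq hx.1 _ hx.2.2]

lemma catPath_tail {α : Γ.FinPath} {x : ℕ → Γ.E} (hx : x ∈ Γ.cone α) :
    Γ.catPath α (tail α.edges.length x) = x := by
  funext i
  by_cases hi : i < α.edges.length
  · simp [catPath, splice, hi, hx.2.2 i hi]
  · simp [catPath, splice, hi, trivPath, Nat.sub_add_cancel (not_lt.1 hi)]

lemma localAction_apply_tail (F : (ℕ → Γ.E) → ℕ → Γ.E) {α : Γ.FinPath} {x : ℕ → Γ.E}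
    (hx : x ∈ Γ.cone α) :
    (Γ.localAction F α).2 (tail α.edges.length x) = tail (Γ.barLen F α) (F x) := by
  have hmem : tail α.edges.length x ∈ Γ.cone (Γ.trivPath (Γ.pathEnd α)) :=
    ⟨tail_mem_shift hx.1 _, by simp [trivPath, pathEnd_eq_of_mem_cone hx], by simp [trivPath]⟩
  simp only [localAction, if_pos hmem, catPath_tail hx]
  rfl

lemma isGreatest_barLen (F : (ℕ → Γ.E) → ℕ → Γ.E) {α : Γ.FinPath} {y z : ℕ → Γ.E}
    (hy : y ∈ Γ.cone α) (hz : z ∈ Γ.cone α) (hne : F y ≠ F z) :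
    IsGreatest {m | ∀ x ∈ Γ.cone α, ∀ i < m, F x i = F z i} (Γ.barLen F α) := by
  set S := {m | ∀ x ∈ Γ.cone α, ∀ i < m, F x i = F z i}
  have hS : {m | ∀ x ∈ Γ.cone α, ∀ x' ∈ Γ.cone α, ∀ i < m, F x i = F x' i} = S := by
    ext m
    exact ⟨fun h x hx i hi => h x hx z hz i hi,
      fun h x hx x' hx' i hi => (h x hx i hi).trans (h x' hx' i hi).symm⟩
  obtain ⟨j, hj⟩ := Function.ne_iff.1 hne
  have hbdd : BddAbove S := ⟨j, fun m hm => not_lt.1 fun hjm => hj (hm y hy j hjm)⟩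
  rw [barLen, hS]
  exact ⟨Nat.sSup_mem ⟨0, fun _ _ _ hi => absurd hi (Nat.not_lt_zero _)⟩ hbdd,
    fun m hm => le_csSup hbdd hm⟩

structure IsCylinderNhd (Γ : FinDigraph) (E : Set (ℕ → Γ.E)) (ω : ℕ → Γ.E) (a : ℕ) : Prop where
  subset_shift : E ⊆ Γ.shift
  pos : 0 < a
  subset : ∀ x ∈ Γ.shift, x ∈ cylinder ω a → x ∈ E
  acc : ∀ n, ∃ y ∈ E, y ∈ cylinder ω n ∧ y ≠ ω

/-- The length of `g̅(ω|n)`. -/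
def prefixBarLen (E : Set (ℕ → Γ.E)) {ω : ℕ → Γ.E} (hω : ω ∈ Γ.shift) (g : Equiv.Perm E)
    (n : ℕ) : ℕ :=
  Γ.barLen (Γ.permExt E g) (prefixPath ω hω n)

/-- The local action `g|_(ω|n)`, as a map of sequences. -/
def prefixLocalAction (E : Set (ℕ → Γ.E)) {ω : ℕ → Γ.E} (hω : ω ∈ Γ.shift) (g : Equiv.Perm E)
    (n : ℕ) : (ℕ → Γ.E) → ℕ → Γ.E :=
  (Γ.localAction (Γ.permExt E g) (prefixPath ω hω n)).2

def profile (E : Set (ℕ → Γ.E)) {ω : ℕ → Γ.E} (hω : ω ∈ Γ.shift) (L : ℕ) (g : Equiv.Perm E)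
    (n : ℕ) : (Γ.V × ((ℕ → Γ.E) → ℕ → Γ.E)) × ℕ × ℕ :=
  (Γ.localAction (Γ.permExt E g) (prefixPath ω hω n), prefixBarLen E hω g n % L, n % L)

lemma permExt_apply {E : Set (ℕ → Γ.E)} (g : Equiv.Perm E) {x : ℕ → Γ.E} (hx : x ∈ E) :
    Γ.permExt E g x = g ⟨x, hx⟩ :=
  dif_pos hx

namespace IsCylinderNhd

variable {E : Set (ℕ → Γ.E)} {ω : ℕ → Γ.E} {a L : ℕ}

lemma cone_subset (hE : Γ.IsCylinderNhd E ω a) (hω : ω ∈ Γ.shift) {n : ℕ} (hn : a ≤ n) :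
    Γ.cone (prefixPath ω hω n) ⊆ E := fun x hx => by
  rw [mem_cone_prefixPath hω (hE.pos.trans_le hn)] at hx
  exact hE.subset x hx.1 (cylinder_anti _ hn hx.2)

lemma isGreatest_prefixBarLen (hE : Γ.IsCylinderNhd E ω a) (hω : ω ∈ Γ.shift) (hωE : ω ∈ E)
    {g : Equiv.Perm E} (hg : g ⟨ω, hωE⟩ = ⟨ω, hωE⟩) {n : ℕ} (hn : a ≤ n) :
    IsGreatest {m | ∀ x ∈ Γ.cone (prefixPath ω hω n), ∀ i < m, Γ.permExt E g x i = ω i}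
      (prefixBarLen E hω g n) := by
  have hpos := hE.pos.trans_le hn
  have hgω : Γ.permExt E g ω = ω := by rw [permExt_apply g hωE, hg]
  obtain ⟨y, hyE, hyn, hyω⟩ := hE.acc n
  have hne : Γ.permExt E g y ≠ Γ.permExt E g ω := by
    rw [permExt_apply g hyE, permExt_apply g hωE]
    exact fun h => hyω (congrArg Subtype.val (g.injective (Subtype.ext h)))
  have hcone := isGreatest_barLen (Γ.permExt E g) ((mem_cone_prefixPath hω hpos).2
    ⟨hE.subset_shift hyE, hyn⟩) ((mem_cone_prefixPath hω hpos).2 ⟨hω, self_mem_cylinder ω n⟩) hne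
  simpa only [hgω, prefixBarLen] using hcone

lemma coe_apply_eq_prefixCat (hE : Γ.IsCylinderNhd E ω a) (hω : ω ∈ Γ.shift) (hωE : ω ∈ E)
    {g : Equiv.Perm E} (hg : g ⟨ω, hωE⟩ = ⟨ω, hωE⟩) {n : ℕ} (hn : a ≤ n) {x : E}
    (hxn : (x : ℕ → Γ.E) ∈ cylinder ω n) :
    (g x : ℕ → Γ.E) =
      prefixCat ω (prefixBarLen E hω g n) (prefixLocalAction E hω g n (tail n x)) := by
  have hxc : (x : ℕ → Γ.E) ∈ Γ.cone (prefixPath ω hω n) :=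
    (mem_cone_prefixPath hω (hE.pos.trans_le hn)).2 ⟨hE.subset_shift x.2, hxn⟩
  have hprefix := (hE.isGreatest_prefixBarLen hω hωE hg hn).1 x hxc
  have htail := localAction_apply_tail (Γ.permExt E g) hxc
  rw [prefixPath_length, permExt_apply g x.2] at htail
  rw [prefixLocalAction, htail]
  funext i
  by_cases hi : i < prefixBarLen E hω g n
  · simpa [prefixCat, hi, permExt_apply g x.2] using hprefix i hi
  · simp only [prefixBarLen] at hi
    simp [prefixCat, prefixBarLen, hi, Nat.sub_add_cancel (not_lt.1 hi)]

lemma tendsto_prefixBarLen (hE : Γ.IsCylinderNhd E ω a) (hω : ω ∈ Γ.shift) (hωE : ω ∈ E)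
    {g : Equiv.Perm E} (hg : g ⟨ω, hωE⟩ = ⟨ω, hωE⟩) (hcont : ContinuousAt g ⟨ω, hωE⟩) :
    Tendsto (prefixBarLen E hω g) atTop atTop := by
  refine tendsto_atTop_atTop.2 fun C => ?_
  have hnear : ∀ᶠ x in 𝓝 (⟨ω, hωE⟩ : E), (g x : ℕ → Γ.E) ∈ cylinder ω C :=
    hcont.eventually <| by
      rw [hg]
      exact (hasBasis_nhds_subtype_cylinder _).mem_of_mem (i := C) trivial
  obtain ⟨N, -, hN⟩ := (hasBasis_nhds_subtype_cylinder _).eventually_iff.1 hnear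
  refine ⟨max N a, fun n hn => (hE.isGreatest_prefixBarLen hω hωE hg (le_of_max_le_right hn)).2
    fun x hx i hi => ?_⟩
  have hxE := hE.cone_subset hω (le_of_max_le_right hn) hx
  have hxn := ((mem_cone_prefixPath hω (hE.pos.trans_le (le_of_max_le_right hn))).1 hx).2
  rw [permExt_apply g hxE]
  exact hN (cylinder_anti _ (le_of_max_le_left hn) hxn) i hi

lemma exists_frequently_profile_eq (hE : Γ.IsCylinderNhd E ω a) (hω : ω ∈ Γ.shift)
    {g : Equiv.Perm E} (hrat : Γ.RationalOn (Γ.permExt E g) E) (hL : 0 < L) :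
    ∃ q ∈ Γ.nucleusOf (Γ.permExt E g) E ×ˢ (Set.Iio L ×ˢ Set.Iio L),
      ∃ᶠ n in atTop, profile E hω L g n = q := by
  have hP := hrat.prod ((Set.finite_Iio L).prod (Set.finite_Iio L))
  have hev : ∀ᶠ n in atTop, profile E hω L g n ∈
      (Γ.localAction (Γ.permExt E g) '' {α | Γ.cone α ⊆ E}) ×ˢ (Set.Iio L ×ˢ Set.Iio L) :=
    (eventually_ge_atTop a).mono fun n hn =>
      ⟨⟨_, hE.cone_subset hω hn, rfl⟩, Nat.mod_lt _ hL, Nat.mod_lt _ hL⟩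
  obtain ⟨q, hqP, hq⟩ := (hP.frequently_exists (p := fun q n => profile E hω L g n = q)).1
    (hev.frequently.mono fun n hn => ⟨_, hn, rfl⟩)
  refine ⟨q, ⟨?_, hqP.2⟩, hq⟩
  have hinf : {n | a ≤ n ∧ profile E hω L g n = q}.Infinite :=
    Nat.frequently_atTop_iff_infinite.1 <|
      (hq.and_eventually (eventually_ge_atTop a)).mono fun n h => ⟨h.2, h.1⟩
  refine (hinf.image (prefixPath_injective hω).injOn).mono ?_
  rintro _ ⟨n, ⟨hn, hnq⟩, rfl⟩
  exact ⟨hE.cone_subset hω hn, congrArg Prod.fst hnq⟩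

variable {f : Equiv.Perm E}

lemma coe_pow_mul_apply (hE : Γ.IsCylinderNhd E ω a) (hper : Periodic (tail a ω) L)
    (hf : InsertsPeriod E ω a L f) (hω : ω ∈ Γ.shift) (hωE : ω ∈ E) {g : Equiv.Perm E}
    (hg : g ⟨ω, hωE⟩ = ⟨ω, hωE⟩) {n : ℕ} (hn : a ≤ n) (hb : a ≤ prefixBarLen E hω g n) (j : ℕ)
    {x : E} (hxn : (x : ℕ → Γ.E) ∈ cylinder ω n) :
    ((f ^ j * g) x : ℕ → Γ.E) =
      prefixCat ω (prefixBarLen E hω g n + j * L) (prefixLocalAction E hω g n (tail n x)) := by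
  have hgx := hE.coe_apply_eq_prefixCat hω hωE hg hn hxn
  rw [Equiv.Perm.mul_apply, hf.coe_pow_apply hper hb j (hgx ▸ prefixCat_mem_cylinder _ _ _), hgx,
    tail_prefixCat]

/-- On the cylinder of `ω|N`, `N = n₁ + n₂`, both sides act as `ω|N · w ↦ ω|b · ρ(v · w)` with
`b = b₁ + j₁ L = b₂ + j₂ L`; the word `v = ω[n₁, N + i₂ L) = ω[n₂, N + i₁ L)` is the same on both
sides because `n₁ ≡ n₂ (mod L)`. -/
theorem eventuallyEq_of_prefixLocalAction_eq (hE : Γ.IsCylinderNhd E ω a)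
    (hper : Periodic (tail a ω) L) (hf : InsertsPeriod E ω a L f) (hω : ω ∈ Γ.shift) (hωE : ω ∈ E)
    {g₁ g₂ : Equiv.Perm E} (hg₁ : g₁ ⟨ω, hωE⟩ = ⟨ω, hωE⟩) (hg₂ : g₂ ⟨ω, hωE⟩ = ⟨ω, hωE⟩)
    {n₁ n₂ i₁ i₂ j₁ j₂ : ℕ} (hn₁ : a ≤ n₁) (hn₂ : a ≤ n₂) (hb₁ : a ≤ prefixBarLen E hω g₁ n₁)
    (hb₂ : a ≤ prefixBarLen E hω g₂ n₂)
    (hρ : prefixLocalAction E hω g₁ n₁ = prefixLocalAction E hω g₂ n₂)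
    (hn : n₁ + i₁ * L = n₂ + i₂ * L)
    (hb : prefixBarLen E hω g₁ n₁ + j₁ * L = prefixBarLen E hω g₂ n₂ + j₂ * L) :
    ⇑(f ^ j₁ * g₁ * f ^ i₂) =ᶠ[𝓝 ⟨ω, hωE⟩] ⇑(f ^ j₂ * g₂ * f ^ i₁) := by
  refine (hasBasis_nhds_subtype_cylinder _).eventually_iff.2 ⟨n₁ + n₂, trivial, fun x hx => ?_⟩
  have hpow : ∀ {n : ℕ} (i : ℕ), a ≤ n → n ≤ n₁ + n₂ →
      ((f ^ i) x : ℕ → Γ.E) ∈ cylinder ω n ∧ tail n ((f ^ i) x : ℕ → Γ.E) =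
        prefixCat (tail n ω) (n₁ + n₂ + i * L - n) (tail (n₁ + n₂) x) := fun i han hn => by
    rw [hf.coe_pow_apply hper (han.trans hn) i hx, tail_prefixCat_of_le (by omega)]
    exact ⟨cylinder_anti _ (by omega) (prefixCat_mem_cylinder _ _ _), rfl⟩
  obtain ⟨hx₁, htail₁⟩ := hpow i₂ hn₁ (by omega)
  obtain ⟨hx₂, htail₂⟩ := hpow i₁ hn₂ (by omega)
  have hω₁₂ : tail n₁ ω = tail n₂ ω := by
    rw [← tail_add_mul hper hn₁ i₁, hn, tail_add_mul hper hn₂ i₂]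
  ext1
  rw [Equiv.Perm.mul_apply, Equiv.Perm.mul_apply (f ^ j₂ * g₂),
    coe_pow_mul_apply hE hper hf hω hωE hg₁ hn₁ hb₁ j₁ hx₁,
    coe_pow_mul_apply hE hper hf hω hωE hg₂ hn₂ hb₂ j₂ hx₂, htail₁, htail₂, hω₁₂, hρ, hb,
    show n₁ + n₂ + i₂ * L - n₁ = n₁ + n₂ + i₁ * L - n₂ by omega]


lemma exists_deep_profile_eq (hE : Γ.IsCylinderNhd E ω a) (hω : ω ∈ Γ.shift) (hωE : ω ∈ E)
    {g : Equiv.Perm E} (hg : g ⟨ω, hωE⟩ = ⟨ω, hωE⟩) (hcont : ContinuousAt g ⟨ω, hωE⟩)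
    {q : (Γ.V × ((ℕ → Γ.E) → ℕ → Γ.E)) × ℕ × ℕ} (hq : ∃ᶠ n in atTop, profile E hω L g n = q)
    (m : ℕ) : ∃ n ≥ m, a ≤ n ∧ a ≤ prefixBarLen E hω g n ∧ profile E hω L g n = q := by
  obtain ⟨n, hmn, hnq, han, hbn⟩ := (hq.and_eventually ((eventually_ge_atTop a).and
    ((hE.tendsto_prefixBarLen hω hωE hg hcont).eventually_ge_atTop a))).forall_exists_of_atTop m
  exact ⟨n, hmn, han, hbn, hnq⟩

lemma germCon_of_profile_eq (hE : Γ.IsCylinderNhd E ω a) (hper : Periodic (tail a ω) L)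
    (hf : InsertsPeriod E ω a L f) (hω : ω ∈ Γ.shift) (hωE : ω ∈ E)
    {G : Subgroup (Equiv.Perm E)} (hG : ∀ g ∈ G, ContinuousAt g ⟨ω, hωE⟩)
    (hfS : f ∈ G ⊓ MulAction.stabilizer (Equiv.Perm E) (⟨ω, hωE⟩ : E))
    {g₁ g₂ : ↥(G ⊓ MulAction.stabilizer (Equiv.Perm E) (⟨ω, hωE⟩ : E))} {n₁ n₂ : ℕ}
    (hn₁ : a ≤ n₁) (hn₂ : a ≤ n₂) (hb₁ : a ≤ prefixBarLen E hω g₁ n₁)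
    (hb₂ : a ≤ prefixBarLen E hω g₂ n₂) (hq : profile E hω L g₁ n₁ = profile E hω L g₂ n₂) :
    ∃ κ ε : ℤ, ε * L = (n₂ : ℤ) - n₁ ∧
      germCon G ⟨ω, hωE⟩ hG g₁ (⟨f, hfS⟩ ^ κ * g₂ * ⟨f, hfS⟩ ^ ε) := by
  have hn := Nat.add_div_mul_eq_of_mod_eq (congrArg (·.2.2) hq)
  have hgerm := hE.eventuallyEq_of_prefixLocalAction_eq hper hf hω hωE g₁.2.2 g₂.2.2 hn₁ hn₂ hb₁
    hb₂ (congrArg (·.1.2) hq) hn (Nat.add_div_mul_eq_of_mod_eq (congrArg (·.2.1) hq))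
  refine ⟨_, _, ?_, Con.rel_zpow_mul_mul_zpow _ (by simpa using hgerm)⟩
  push_cast
  linarith [congrArg (Nat.cast : ℕ → ℤ) hn]

lemma exists_germCon_of_frequently_profile_eq (hE : Γ.IsCylinderNhd E ω a)
    (hper : Periodic (tail a ω) L) (hf : InsertsPeriod E ω a L f) (hω : ω ∈ Γ.shift)
    (hωE : ω ∈ E) {G : Subgroup (Equiv.Perm E)} (hG : ∀ g ∈ G, ContinuousAt g ⟨ω, hωE⟩)
    (hfS : f ∈ G ⊓ MulAction.stabilizer (Equiv.Perm E) (⟨ω, hωE⟩ : E))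
    {g₁ g₂ : ↥(G ⊓ MulAction.stabilizer (Equiv.Perm E) (⟨ω, hωE⟩ : E))}
    {q : (Γ.V × ((ℕ → Γ.E) → ℕ → Γ.E)) × ℕ × ℕ}
    (hq₁ : ∃ᶠ n in atTop, profile E hω L g₁ n = q) (hq₂ : ∃ᶠ n in atTop, profile E hω L g₂ n = q) :
    ∃ κ ε : ℤ, ε ≠ 0 ∧ germCon G ⟨ω, hωE⟩ hG g₁ (⟨f, hfS⟩ ^ κ * g₂ * ⟨f, hfS⟩ ^ ε) := by
  obtain ⟨n₁, -, hn₁, hb₁, h₁⟩ := hE.exists_deep_profile_eq hω hωE g₁.2.2 (hG _ g₁.2.1) hq₁ 0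
  obtain ⟨n₂, hlt, hn₂, hb₂, h₂⟩ :=
    hE.exists_deep_profile_eq hω hωE g₂.2.2 (hG _ g₂.2.1) hq₂ (n₁ + 1)
  obtain ⟨κ, ε, hε, hκε⟩ :=
    hE.germCon_of_profile_eq hper hf hω hωE hG hfS hn₁ hn₂ hb₁ hb₂ (h₁.trans h₂.symm)
  refine ⟨κ, ε, fun h0 => ?_, hκε⟩
  rw [h0, zero_mul] at hε
  omega

theorem exists_finite_germ_cover (hE : Γ.IsCylinderNhd E ω a) (hper : Periodic (tail a ω) L)
    (hL : 0 < L) (hf : InsertsPeriod E ω a L f) (hω : ω ∈ Γ.shift) (hωE : ω ∈ E)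
    {G : Subgroup (Equiv.Perm E)} (hfG : f ∈ G) (hG : ∀ g ∈ G, Γ.IsRatHomeo E g)
    (hnuc : (Γ.groupNucleus E G).Finite) :
    ∃ F : Set (Equiv.Perm E), F.Finite ∧ (∀ u ∈ F, u ∈ G ∧ u ⟨ω, hωE⟩ = ⟨ω, hωE⟩) ∧
      ∀ h ∈ G, h ⟨ω, hωE⟩ = ⟨ω, hωE⟩ → ∃ k : ℤ, ∃ u ∈ F, ⇑h =ᶠ[𝓝 ⟨ω, hωE⟩] ⇑(f ^ k * u) := by
  have hGc : ∀ g ∈ G, ContinuousAt g ⟨ω, hωE⟩ := fun g hg => (hG g hg).1.continuousAt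
  have hfS : f ∈ G ⊓ MulAction.stabilizer (Equiv.Perm E) (⟨ω, hωE⟩ : E) :=
    ⟨hfG, hf.apply_self hper hωE⟩
  obtain ⟨F, hF, hcover⟩ := (germCon G ⟨ω, hωE⟩ hGc).exists_finite_zpow_mul_cover ⟨f, hfS⟩
    (hnuc.prod ((Set.finite_Iio L).prod (Set.finite_Iio L)))
    (fun g q => ∃ᶠ n in atTop, profile E hω L g n = q)
    (fun g => by
      obtain ⟨q, ⟨hq₁, hq₂⟩, hq⟩ := hE.exists_frequently_profile_eq hω (hG g g.2.1).2.2 hL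
      exact ⟨q, ⟨Set.mem_biUnion g.2.1 hq₁, hq₂⟩, hq⟩)
    (fun _ _ _ => hE.exists_germCon_of_frequently_profile_eq hper hf hω hωE hGc hfS)
  refine ⟨Subtype.val '' F, hF.image _, ?_, fun h hhG hhfix => ?_⟩
  · rintro _ ⟨u, -, rfl⟩
    exact ⟨u.2.1, u.2.2⟩
  · obtain ⟨k, u, hu, hk⟩ := hcover ⟨h, hhG, hhfix⟩
    exact ⟨k, u, ⟨u, hu, rfl⟩, by simpa using hk⟩

end IsCylinderNhd

variable {E : Set (ℕ → Γ.E)} {ω : ℕ → Γ.E}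

lemma IsRationalPt.exists_periodic (hω : Γ.IsRationalPt ω) :
    ∃ s L : ℕ, 0 < L ∧ Periodic (tail s ω) L := by
  obtain ⟨σ, τ, hτ, -, hper⟩ := hω
  have hL := List.length_pos_iff.2 hτ
  refine ⟨σ.edges.length, τ.edges.length, hL, fun i => ?_⟩
  simp only [tail_apply]
  rw [hper _ (by omega) (Nat.mod_lt _ hL), hper _ (by omega) (Nat.mod_lt _ hL)]
  congr 2
  simp only [Nat.add_sub_cancel, Nat.add_mod_right]

lemma eventually_isCylinderNhd (hiso : Γ.NoIsolatedPoints) (hEsub : E ⊆ Γ.shift)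
    (hEclopen : Γ.ClopenIn E) (hωE : ω ∈ E) :
    ∀ᶠ a in atTop, Γ.IsCylinderNhd E ω a ∧ ∃ y ∈ E, y ∉ cylinder ω a := by
  have hω := hEsub hωE
  obtain ⟨N, -, hN⟩ := (hasBasis_nhds_subtype_cylinder (⟨ω, hω⟩ : Γ.shift)).mem_iff.1
    (hEclopen.isOpen.mem_nhds hωE)
  have hsub : ∀ n ≥ N, ∀ x ∈ Γ.shift, x ∈ cylinder ω n → x ∈ E := fun n hn x hx hxn =>
    hN (a := ⟨x, hx⟩) (cylinder_anti _ hn hxn)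
  have hacc : ∀ n, ∃ y ∈ E, y ∈ cylinder ω n ∧ y ≠ ω := fun n => by
    obtain ⟨y, hy, hyn, hyω⟩ := exists_mem_cylinder_ne hω (hiso ⟨ω, hω⟩) (max n N)
    exact ⟨y, hsub _ (le_max_right n N) y hy hyn, cylinder_anti _ (le_max_left n N) hyn, hyω⟩
  obtain ⟨y, hyE, -, hyω⟩ := hacc 0
  obtain ⟨p, hp⟩ := Function.ne_iff.1 hyω
  filter_upwards [eventually_ge_atTop N, eventually_gt_atTop p] with a haN hap
  exact ⟨⟨hEsub, by omega, hsub a haN, hacc⟩, y, hyE, fun hy => hp (hy p hap)⟩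

lemma IsRSG.exists_insertsPeriod {G : Subgroup (Equiv.Perm E)} (hRSG : Γ.IsRSG E G) {a L : ℕ}
    (hE : Γ.IsCylinderNhd E ω a) (hper : Periodic (tail a ω) L) (hω : ω ∈ Γ.shift)
    (hproper : ∃ y ∈ E, y ∉ cylinder ω a) : ∃ f ∈ G, InsertsPeriod E ω a L f := by
  have hcone : ∀ {n}, a ≤ n → ∀ y,
      y ∈ Γ.cone (prefixPath ω hω n) ↔ y ∈ Γ.shift ∧ y ∈ cylinder ω n :=
    fun hn y => mem_cone_prefixPath hω (hE.pos.trans_le hn)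
  have hssub : ∀ n, a ≤ n → Γ.cone (prefixPath ω hω n) ⊂ E := fun n hn => by
    obtain ⟨y, hyE, hy⟩ := hproper
    refine (Set.ssubset_iff_of_subset (hE.cone_subset hω hn)).2 ⟨y, hyE, fun hyc => hy ?_⟩
    exact cylinder_anti _ hn ((hcone hn y).1 hyc).2
  have hend : Γ.pathEnd (prefixPath ω hω a) = Γ.pathEnd (prefixPath ω hω (a + L)) := by
    rw [pathEnd_eq_of_mem_cone ((hcone le_rfl ω).2 ⟨hω, self_mem_cylinder ω a⟩),
      pathEnd_eq_of_mem_cone ((hcone (Nat.le_add_right a L) ω).2 ⟨hω, self_mem_cylinder ω _⟩),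
      prefixPath_length, prefixPath_length, apply_add_of_periodic hper le_rfl]
  obtain ⟨f, hfG, hf⟩ := hRSG.2 _ _ hend (hssub a le_rfl) (hssub _ (Nat.le_add_right a L))
  refine ⟨f, hfG, fun y hy => ?_⟩
  rw [← splice_prefixPath hω a (a + L)]
  exact hf y y.2 ((hcone le_rfl y).2 ⟨hE.subset_shift y.2, hy⟩)

end FinDigraph

theorem germ_group_virtually_infinite_cyclic_general (Γ : FinDigraph)
    (hiso : Γ.NoIsolatedPoints)
    (E : Set (ℕ → Γ.E)) (hEsub : E ⊆ Γ.shift)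
    (hEclopen : Γ.ClopenIn E)
    (G : Subgroup (Equiv.Perm ↥E)) (hRSG : Γ.IsRSG E G)
    (hnuc : (Γ.groupNucleus E G).Finite)
    (ω : ℕ → Γ.E) (hωE : ω ∈ E) (hω : Γ.IsRationalPt ω) :
    ∃ f : Equiv.Perm ↥E, f ∈ G ∧ f ⟨ω, hωE⟩ = ⟨ω, hωE⟩ ∧
      (∀ k : ℤ, k ≠ 0 → ¬LocTrivAt (f ^ k) (⟨ω, hωE⟩ : ↥E)) ∧
      ∃ F : Set (Equiv.Perm ↥E), F.Finite ∧
        (∀ u ∈ F, u ∈ G ∧ u ⟨ω, hωE⟩ = ⟨ω, hωE⟩) ∧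
        ∀ h : Equiv.Perm ↥E, h ∈ G → h ⟨ω, hωE⟩ = ⟨ω, hωE⟩ →
          ∃ k : ℤ, ∃ u ∈ F, LocTrivAt ((f ^ k * u)⁻¹ * h) (⟨ω, hωE⟩ : ↥E) := by
  obtain ⟨s, L, hL, hperiodic⟩ := hω.exists_periodic
  obtain ⟨a, ⟨hE, hproper⟩, hsa⟩ :=
    ((FinDigraph.eventually_isCylinderNhd hiso hEsub hEclopen hωE).and
      (eventually_ge_atTop s)).exists
  have hper := PiNat.periodic_tail_of_le hperiodic hsa
  obtain ⟨f, hfG, hf⟩ := hRSG.exists_insertsPeriod hE hper (hEsub hωE) hproper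
  obtain ⟨F, hF, hFG, hcover⟩ :=
    hE.exists_finite_germ_cover hper hL hf (hEsub hωE) hωE hfG hRSG.1 hnuc
  refine ⟨f, hfG, hf.apply_self hper hωE,
    fun k hk => not_locTrivAt_zpow (fun n hn => hf.not_eventuallyEq_pow hper hL hωE hE.acc hn) hk,
    F, hF, hFG, fun h hhG hhfix => ?_⟩
  obtain ⟨k, u, hu, hk⟩ := hcover h hhG hhfix
  exact ⟨k, u, hu, locTrivAt_inv_mul_of_eventuallyEq hk⟩

/-- If `G ≤ R_{Γ,E}` is an RSG with finite nucleus and `ω ∈ E` is a rational point,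
then the group of germs `[G]_ω = Stab_G(ω)/Fix⁰_G(ω)` is virtually infinite cyclic:
there is an `f ∈ Stab_G(ω)` whose germ at `ω` has infinite order and whose germ
generates a finite-index cyclic subgroup of the group of germs. -/
theorem germ_group_virtually_infinite_cyclic (Γ : FinDigraph)
    (hiso : Γ.NoIsolatedPoints) (hcones : Γ.NoEmptyCones)
    (E : Set (ℕ → Γ.E)) (hEsub : E ⊆ Γ.shift) (hEne : E.Nonempty)
    (hEclopen : Γ.ClopenIn E)
    (G : Subgroup (Equiv.Perm ↥E)) (hRSG : Γ.IsRSG E G)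
    (hnuc : (Γ.groupNucleus E G).Finite)
    (ω : ℕ → Γ.E) (hωE : ω ∈ E) (hω : Γ.IsRationalPt ω) :
    ∃ f : Equiv.Perm ↥E, f ∈ G ∧ f ⟨ω, hωE⟩ = ⟨ω, hωE⟩ ∧
      (∀ k : ℤ, k ≠ 0 → ¬LocTrivAt (f ^ k) (⟨ω, hωE⟩ : ↥E)) ∧
      ∃ F : Set (Equiv.Perm ↥E), F.Finite ∧
        (∀ u ∈ F, u ∈ G ∧ u ⟨ω, hωE⟩ = ⟨ω, hωE⟩) ∧
        ∀ h : Equiv.Perm ↥E, h ∈ G → h ⟨ω, hωE⟩ = ⟨ω, hωE⟩ →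
          ∃ k : ℤ, ∃ u ∈ F, LocTrivAt ((f ^ k * u)⁻¹ * h) (⟨ω, hωE⟩ : ↥E) :=
  germ_group_virtually_infinite_cyclic_general Γ hiso E hEsub hEclopen G hRSG hnuc ω hωE hω

end
end
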